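/- arXiv:math/0604510 — 6 statements merged into one kernel-verified Lean document; each statement's English description precedes it below -/
import Mathlib

section
/- Let g : ℝ → ℝ be a nonnegative, nonincreasing, integrable function on [0, ∞). Then ∫₀^∞ g(x) sin(x) dx ≥ 0. -/
open MeasureTheory

theorem stmt_0 (g : ℝ → ℝ) (hg_nonneg : ∀ x ∈ Set.Ici (0 : ℝ), 0 ≤ g x)
    (hg_anti : AntitoneOn g (Set.Ici (0 : ℝ)))
    (hg_int : IntegrableOn g (Set.Ici (0 : ℝ))) :
    0 ≤ ∫ x in Set.Ici (0 : ℝ), g x * Real.sin x := by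
  have hπ : (0:ℝ) < Real.pi := Real.pi_pos
  set f : ℝ → ℝ := fun x => g x * Real.sin x with hfdef
  -- integrability of f on Ici 0
  have hfi : IntegrableOn f (Set.Ici (0 : ℝ)) := by
    have h1 : IntegrableOn (fun x => Real.sin x * g x) (Set.Ici (0 : ℝ)) :=
      hg_int.bdd_mul (Real.measurable_sin.aestronglyMeasurable)
        (c := 1) (Filter.Eventually.of_forall fun x => by simpa [Real.norm_eq_abs] using Real.abs_sin_le_one x)
    exact h1.congr (Filter.Eventually.of_forall fun x => mul_comm _ _)
  -- interval integrability on nonneg intervals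
  have hII : ∀ a b : ℝ, 0 ≤ a → a ≤ b → IntervalIntegrable f volume a b := by
    intro a b ha hab
    rw [intervalIntegrable_iff_integrableOn_Ioc_of_le hab]
    exact hfi.mono_set (fun x hx => le_trans ha (le_of_lt hx.1))
  -- the pieces
  set s : ℕ → Set ℝ := fun j => Set.Ioc (2 * Real.pi * j) (2 * Real.pi * (j + 1)) with hsdef
  have hUnion : (⋃ j, s j) = Set.Ioi (0 : ℝ) := by
    ext x
    simp only [hsdef, Set.mem_iUnion, Set.mem_Ioc, Set.mem_Ioi]
    constructor
    · rintro ⟨j, h1, h2⟩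
      have : (0:ℝ) ≤ 2 * Real.pi * j := by positivity
      linarith
    · intro hx
      have h2π : (0:ℝ) < 2 * Real.pi := by positivity
      set n := ⌈x / (2 * Real.pi)⌉₊ with hn
      have hn1 : 1 ≤ n := Nat.one_le_ceil_iff.2 (div_pos hx h2π)
      refine ⟨n - 1, ?_, ?_⟩
      · have hlt : ((n:ℝ) - 1) < x / (2 * Real.pi) := by
          have h := Nat.ceil_lt_add_one (le_of_lt (div_pos hx h2π))
          rw [hn]; linarith
        have : ((n - 1 : ℕ) : ℝ) = (n:ℝ) - 1 := by
          rw [Nat.cast_sub hn1, Nat.cast_one]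
        rw [this]
        calc 2 * Real.pi * ((n:ℝ) - 1) < 2 * Real.pi * (x / (2 * Real.pi)) := by
              exact mul_lt_mul_of_pos_left hlt h2π
          _ = x := by field_simp
      · have hle : x / (2 * Real.pi) ≤ n := Nat.le_ceil _
        have : ((n - 1 : ℕ) : ℝ) + 1 = (n:ℝ) := by
          rw [Nat.cast_sub hn1, Nat.cast_one]; ring
        rw [this]
        calc x = 2 * Real.pi * (x / (2 * Real.pi)) := by field_simp
          _ ≤ 2 * Real.pi * n := mul_le_mul_of_nonneg_left hle (le_of_lt h2π)
  have hdisj : Pairwise (Function.onFun Disjoint s) := by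
    have key : ∀ i j : ℕ, i < j → Disjoint (s i) (s j) := by
      intro i j hij
      rw [hsdef]
      refine Set.Ioc_disjoint_Ioc.2 ?_
      have h1 : 2 * Real.pi * ((i:ℝ) + 1) ≤ 2 * Real.pi * (j:ℝ) := by
        have : ((i:ℝ) + 1) ≤ (j:ℝ) := by exact_mod_cast hij
        nlinarith
      calc min (2 * Real.pi * ((i:ℝ) + 1)) (2 * Real.pi * ((j:ℝ) + 1))
          ≤ 2 * Real.pi * ((i:ℝ) + 1) := min_le_left _ _
        _ ≤ 2 * Real.pi * (j:ℝ) := h1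
        _ ≤ max (2 * Real.pi * (i:ℝ)) (2 * Real.pi * (j:ℝ)) := le_max_right _ _
    intro i j hij
    rcases hij.lt_or_gt with h | h
    · exact key i j h
    · exact (key j i h).symm
  have hfiU : IntegrableOn f (⋃ j, s j) := by
    rw [hUnion]; exact hfi.mono_set Set.Ioi_subset_Ici_self
  have hS : HasSum (fun j => ∫ x in s j, f x) (∫ x in ⋃ j, s j, f x) :=
    hasSum_integral_iUnion (fun j => measurableSet_Ioc) hdisj hfiU
  -- each piece is nonneg
  have hterm : ∀ j : ℕ, 0 ≤ ∫ x in s j, f x := by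
    intro j
    set c : ℝ := 2 * Real.pi * j with hc
    have hc0 : 0 ≤ c := by positivity
    have hsj : s j = Set.Ioc c (c + 2 * Real.pi) := by
      rw [hsdef, hc]; congr 1; ring
    have hle1 : c ≤ c + Real.pi := by linarith
    have hle2 : c + Real.pi ≤ c + 2 * Real.pi := by linarith
    have h1 : IntervalIntegrable f volume c (c + Real.pi) := hII _ _ hc0 hle1
    have h2 : IntervalIntegrable f volume (c + Real.pi) (c + 2 * Real.pi) :=
      hII _ _ (by linarith) hle2
    have h2' : IntervalIntegrable (fun x => f (x + Real.pi)) volume c (c + Real.pi) := by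
      have h := h2.comp_add_right Real.pi
      have e1 : c + Real.pi - Real.pi = c := by ring
      have e2 : c + 2 * Real.pi - Real.pi = c + Real.pi := by ring
      rwa [e1, e2] at h
    have hsplit : (∫ x in c..(c + Real.pi), f x) + (∫ x in (c + Real.pi)..(c + 2 * Real.pi), f x)
        = ∫ x in c..(c + 2 * Real.pi), f x :=
      intervalIntegral.integral_add_adjacent_intervals h1 h2
    have hshift : (∫ x in (c + Real.pi)..(c + 2 * Real.pi), f x)
        = ∫ x in c..(c + Real.pi), f (x + Real.pi) := by
      rw [intervalIntegral.integral_comp_add_right]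
      congr 1
      ring
    have hcomb : (∫ x in c..(c + 2 * Real.pi), f x)
        = ∫ x in c..(c + Real.pi), (f x + f (x + Real.pi)) := by
      rw [← hsplit, hshift, intervalIntegral.integral_add h1 h2']
    have hpt : ∀ u ∈ Set.Icc c (c + Real.pi), 0 ≤ f u + f (u + Real.pi) := by
      intro u hu
      have hu0 : (0:ℝ) ≤ u := le_trans hc0 hu.1
      have hsin : Real.sin (u + Real.pi) = -Real.sin u := Real.sin_add_pi u
      have hsin0 : 0 ≤ Real.sin u := by
        have heq : Real.sin u = Real.sin (u - c) := by
          rw [← Real.sin_add_nat_mul_two_pi (u - c) j]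
          congr 1
          rw [hc]; ring
        rw [heq]
        exact Real.sin_nonneg_of_nonneg_of_le_pi (by linarith [hu.1]) (by linarith [hu.2])
      have hmono : g (u + Real.pi) ≤ g u :=
        hg_anti hu0 (by simp only [Set.mem_Ici]; linarith) (by linarith)
      have : f u + f (u + Real.pi) = (g u - g (u + Real.pi)) * Real.sin u := by
        simp only [hfdef, hsin]; ring
      rw [this]
      exact mul_nonneg (by linarith) hsin0
    have : 0 ≤ ∫ x in c..(c + 2 * Real.pi), f x := by
      rw [hcomb]
      exact intervalIntegral.integral_nonneg hle1 hpt
    rwa [hsj, ← intervalIntegral.integral_of_le (by linarith : c ≤ c + 2 * Real.pi)]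
  have hItot : 0 ≤ ∫ x in ⋃ j, s j, f x :=
    hasSum_le (fun j => hterm j) hasSum_zero hS
  rw [show Set.Ici (0:ℝ) = Set.Ici (0:ℝ) from rfl]
  calc (0:ℝ) ≤ ∫ x in ⋃ j, s j, f x := hItot
    _ = ∫ x in Set.Ioi (0:ℝ), f x := by rw [hUnion]
    _ = ∫ x in Set.Ici (0:ℝ), f x := (integral_Ici_eq_integral_Ioi).symm
end

section
/- Let f : ℝ → ℝ be an even integrable function whose restriction to [0,∞) is nonnegative, nonincreasing and convex, differentiable almost everywhere with integrable derivative. Then the Fourier transform of f is nonnegative, i.e. for every ξ ∈ ℝ, ∫_ℝ f(x) cos(xξ) dx ≥ 0. -/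
open MeasureTheory

private lemma conv4 {g : ℝ → ℝ} (hg : ConvexOn ℝ (Set.Ici (0:ℝ)) g)
    {x y z w : ℝ} (hx : 0 ≤ x) (hxy : x ≤ y) (hyz : y ≤ z) (hzw : z ≤ w)
    (hsum : x + w = y + z) : g y + g z ≤ g x + g w := by
  rcases eq_or_lt_of_le (hxy.trans (hyz.trans hzw)) with h | hxw
  · have hxy' : x = y := le_antisymm hxy (by linarith)
    have hzw' : z = w := le_antisymm hzw (by linarith)
    rw [hxy', hzw']
  · set s := (w - y) / (w - x) with hs
    have hwx : 0 < w - x := by linarith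
    have hs0 : 0 ≤ s := div_nonneg (by linarith) hwx.le
    have hs1 : s ≤ 1 := (div_le_one hwx).2 (by linarith)
    have hsx : s * (w - x) = w - y := div_mul_cancel₀ _ hwx.ne'
    have hy : y = s • x + (1 - s) • w := by
      simp only [smul_eq_mul]; linear_combination hsx
    have hz : z = (1 - s) • x + s • w := by
      simp only [smul_eq_mul]; linear_combination -hsx - hsum
    have hw0 : (0:ℝ) ≤ w := hx.trans (hxy.trans (hyz.trans hzw))
    have h1 : g (s • x + (1 - s) • w) ≤ s • g x + (1 - s) • g w :=
      hg.2 (Set.mem_Ici.2 hx) (Set.mem_Ici.2 hw0) hs0 (by linarith) (by ring)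
    have h2 : g ((1 - s) • x + s • w) ≤ (1 - s) • g x + s • g w :=
      hg.2 (Set.mem_Ici.2 hx) (Set.mem_Ici.2 hw0) (by linarith) hs0 (by ring)
    rw [← hy] at h1
    rw [← hz] at h2
    simp only [smul_eq_mul] at h1 h2
    nlinarith [h1, h2]

open Real in
private lemma period_nonneg {g : ℝ → ℝ} (hconv : ConvexOn ℝ (Set.Ici (0:ℝ)) g)
    (hF : Integrable (fun x => g x * Real.cos x)) (a : ℝ) (ha : 0 ≤ a)
    (hcos : ∀ t : ℝ, Real.cos (a + t) = Real.cos t) :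
    0 ≤ ∫ x in a..(a + 2 * π), g x * Real.cos x := by
  set F : ℝ → ℝ := fun x => g x * Real.cos x with hFdef
  have hshift : (∫ t in (0:ℝ)..(2*π), F (a + t)) = ∫ x in a..(a + 2*π), F x := by
    simpa using intervalIntegral.integral_comp_add_left F a
  rw [← hshift]
  set G : ℝ → ℝ := fun t => g (a + t) * Real.cos t with hGdef
  have hGF : (fun t => F (a + t)) = G := by
    funext t; simp only [hFdef, hGdef, hcos t]
  rw [hGF]
  have hG : Integrable G := by rw [← hGF]; exact hF.comp_add_left a
  have hGi : ∀ p q : ℝ, IntervalIntegrable G volume p q := fun p q => hG.intervalIntegrable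
  have hG2 : Integrable (fun t => G (π - t)) := hG.comp_sub_left π
  have hG3 : Integrable (fun t => G (π + t)) := hG.comp_add_left π
  have hG4 : Integrable (fun t => G (2*π - t)) := hG.comp_sub_left (2*π)
  have e2 : (∫ t in (π/2)..π, G t) = ∫ t in (0:ℝ)..(π/2), G (π - t) := by
    rw [intervalIntegral.integral_comp_sub_left G π]
    norm_num
    rw [show π - π/2 = π/2 by ring]
  have e3 : (∫ t in π..(π + π/2), G t) = ∫ t in (0:ℝ)..(π/2), G (π + t) := by
    rw [intervalIntegral.integral_comp_add_left G π, add_zero]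
  have e4 : (∫ t in (π + π/2)..(2*π), G t) = ∫ t in (0:ℝ)..(π/2), G (2*π - t) := by
    rw [intervalIntegral.integral_comp_sub_left G (2*π)]
    rw [show 2*π - π/2 = π + π/2 by ring, sub_zero]
  have split : (∫ t in (0:ℝ)..(2*π), G t)
      = (∫ t in (0:ℝ)..(π/2), G t) + ((∫ t in (π/2)..π, G t)
        + ((∫ t in π..(π + π/2), G t) + (∫ t in (π + π/2)..(2*π), G t))) := by
    rw [intervalIntegral.integral_add_adjacent_intervals (hGi π (π + π/2)) (hGi (π + π/2) (2*π)),
      intervalIntegral.integral_add_adjacent_intervals (hGi (π/2) π) (hGi π (2*π)),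
      intervalIntegral.integral_add_adjacent_intervals (hGi 0 (π/2)) (hGi (π/2) (2*π))]
  have i34 : IntervalIntegrable (fun t => G (π + t) + G (2*π - t)) volume 0 (π/2) :=
    (hG3.intervalIntegrable).add (hG4.intervalIntegrable)
  have i234 : IntervalIntegrable (fun t => G (π - t) + (G (π + t) + G (2*π - t))) volume 0 (π/2) :=
    (hG2.intervalIntegrable).add i34
  rw [split, e2, e3, e4,
    ← intervalIntegral.integral_add hG3.intervalIntegrable hG4.intervalIntegrable,
    ← intervalIntegral.integral_add hG2.intervalIntegrable i34,
    ← intervalIntegral.integral_add (hGi 0 (π/2)) i234]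
  apply intervalIntegral.integral_nonneg (by positivity)
  intro t ht
  obtain ⟨ht0, ht1⟩ := ht
  have hc1 : Real.cos (π - t) = -Real.cos t := Real.cos_pi_sub t
  have hc2 : Real.cos (π + t) = -Real.cos t := by
    rw [Real.cos_add]; simp
  have hc3 : Real.cos (2*π - t) = Real.cos t := Real.cos_two_pi_sub t
  have hG' : G t + (G (π - t) + (G (π + t) + G (2*π - t)))
      = (g (a + t) + g (a + (2*π - t)) - (g (a + (π - t)) + g (a + (π + t)))) * Real.cos t := by
    simp only [hGdef, hc1, hc2, hc3]; ring
  rw [hG']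
  have hπ := Real.pi_pos
  have hcos_nonneg : 0 ≤ Real.cos t :=
    Real.cos_nonneg_of_mem_Icc ⟨by linarith, ht1⟩
  have hkey : g (a + (π - t)) + g (a + (π + t)) ≤ g (a + t) + g (a + (2*π - t)) :=
    conv4 hconv (by linarith) (by linarith) (by linarith) (by linarith) (by ring)
  have : 0 ≤ g (a + t) + g (a + (2*π - t)) - (g (a + (π - t)) + g (a + (π + t))) := by linarith
  exact mul_nonneg this hcos_nonneg

open Real in
private lemma key_Ioi {g : ℝ → ℝ} (hconv : ConvexOn ℝ (Set.Ici (0:ℝ)) g)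
    (hF : Integrable (fun x => g x * Real.cos x)) :
    0 ≤ ∫ x in Set.Ioi (0:ℝ), g x * Real.cos x := by
  have hπ := Real.pi_pos
  set F : ℝ → ℝ := fun x => g x * Real.cos x with hFdef
  have hsum : ∀ n : ℕ, 0 ≤ ∫ x in (0:ℝ)..((n:ℝ) * (2*π)), F x := by
    intro n
    induction n with
    | zero => simp
    | succ n ih =>
      have hadj : (∫ x in (0:ℝ)..(((n:ℝ)+1) * (2*π)), F x)
          = (∫ x in (0:ℝ)..((n:ℝ) * (2*π)), F x)
            + ∫ x in ((n:ℝ)*(2*π))..(((n:ℝ)+1) * (2*π)), F x :=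
        (intervalIntegral.integral_add_adjacent_intervals hF.intervalIntegrable
          hF.intervalIntegrable).symm
      have hper : 0 ≤ ∫ x in ((n:ℝ)*(2*π))..(((n:ℝ)+1) * (2*π)), F x := by
        have := period_nonneg hconv hF ((n:ℝ)*(2*π)) (by positivity)
          (fun t => by
            rw [add_comm]
            exact_mod_cast Real.cos_add_int_mul_two_pi t n)
        rw [show ((n:ℝ)+1) * (2*π) = (n:ℝ)*(2*π) + 2*π by ring]
        exact this
      push_cast
      rw [hadj]
      exact add_nonneg ih hper
  have htend : Filter.Tendsto (fun n : ℕ => ∫ x in (0:ℝ)..((n:ℝ) * (2*π)), F x)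
      Filter.atTop (nhds (∫ x in Set.Ioi (0:ℝ), F x)) := by
    apply intervalIntegral_tendsto_integral_Ioi 0 hF.integrableOn
    exact Filter.Tendsto.atTop_mul_const (by positivity) tendsto_natCast_atTop_atTop
  exact ge_of_tendsto htend (Filter.Eventually.of_forall hsum)

private lemma key_all {g : ℝ → ℝ} (hg_even : ∀ x : ℝ, g (-x) = g x)
    (hconv : ConvexOn ℝ (Set.Ici (0:ℝ)) g)
    (hF : Integrable (fun x => g x * Real.cos x)) :
    0 ≤ ∫ x : ℝ, g x * Real.cos x := by
  have heven : ∀ x : ℝ, g |x| * Real.cos |x| = g x * Real.cos x := by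
    intro x
    rcases abs_cases x with ⟨h, _⟩ | ⟨h, _⟩
    · rw [h]
    · rw [h, hg_even, Real.cos_neg]
  have := integral_comp_abs (f := fun x => g x * Real.cos x)
  simp only [heven] at this
  rw [this]
  have := key_Ioi hconv hF
  linarith

theorem stmt_1 (f : ℝ → ℝ)
    (hf_even : ∀ x : ℝ, f (-x) = f x)
    (hf_int : Integrable f)
    (hf_nonneg : ∀ x : ℝ, 0 ≤ f x)
    (hf_anti : AntitoneOn f (Set.Ici (0 : ℝ)))
    (hf_convex : ConvexOn ℝ (Set.Ici (0 : ℝ)) f)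
    (hf_diff : ∀ᵐ x : ℝ, DifferentiableAt ℝ f x)
    (hf_deriv_int : Integrable (deriv f)) :
    ∀ ξ : ℝ, 0 ≤ ∫ x : ℝ, f x * Real.cos (x * ξ) := by
  intro ξ
  rcases eq_or_ne ξ 0 with rfl | hξ
  · simp only [mul_zero, Real.cos_zero, mul_one]
    exact integral_nonneg hf_nonneg
  · set c : ℝ := |ξ| with hc
    have hc0 : 0 < c := abs_pos.2 hξ
    have hcoseq : ∀ x : ℝ, Real.cos (x * ξ) = Real.cos (x * c) := by
      intro x
      rcases abs_cases ξ with ⟨h, _⟩ | ⟨h, _⟩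
      · rw [hc, h]
      · rw [hc, h, mul_neg, Real.cos_neg]
    simp_rw [hcoseq]
    set g : ℝ → ℝ := fun y => f (c⁻¹ * y) with hg
    have hGx : ∀ x : ℝ, g (c * x) * Real.cos (c * x) = f x * Real.cos (x * c) := by
      intro x
      simp only [hg, inv_mul_cancel_left₀ hc0.ne', mul_comm x c]
    have hscale := MeasureTheory.Measure.integral_comp_mul_left (fun y => g y * Real.cos y) c
    simp only [hGx] at hscale
    rw [hscale]
    have hg_even : ∀ x : ℝ, g (-x) = g x := by
      intro x; simp only [hg, mul_neg, hf_even]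
    have hg_conv : ConvexOn ℝ (Set.Ici (0:ℝ)) g := by
      refine ⟨convex_Ici 0, fun x hx y hy a b ha hb hab => ?_⟩
      have hx0 : (0:ℝ) ≤ x := hx
      have hy0 : (0:ℝ) ≤ y := hy
      have hx' : (0:ℝ) ≤ c⁻¹ * x := mul_nonneg (inv_nonneg.2 hc0.le) hx0
      have hy' : (0:ℝ) ≤ c⁻¹ * y := mul_nonneg (inv_nonneg.2 hc0.le) hy0
      have h := hf_convex.2 (Set.mem_Ici.2 hx') (Set.mem_Ici.2 hy') ha hb hab
      simp only [smul_eq_mul, hg] at h ⊢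
      rw [show c⁻¹ * (a * x + b * y) = a * (c⁻¹ * x) + b * (c⁻¹ * y) by ring]
      exact h
    have hg_int : Integrable g := hf_int.comp_mul_left' (inv_ne_zero hc0.ne')
    have hF : Integrable (fun x => g x * Real.cos x) := by
      have := hg_int.bdd_mul (Real.continuous_cos.aestronglyMeasurable)
        (c := 1) (Filter.Eventually.of_forall fun x => by simpa using Real.abs_cos_le_one x)
      simpa [mul_comm] using this
    have := key_all hg_even hg_conv hF
    positivity
end

section
/- The function f(x) = 1/(1 + e^{|x|}) is positive definite: for every ξ ∈ ℝ, ∫_ℝ cos(xξ)/(1 + e^{|x|}) dx ≥ 0. -/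
open Real Set MeasureTheory intervalIntegral

noncomputable def hfun (x : ℝ) : ℝ := (1 + Real.exp x)⁻¹

lemma one_add_exp_pos (x : ℝ) : 0 < 1 + Real.exp x := by positivity

lemma hfun_cont : Continuous hfun :=
  (continuous_const.add Real.continuous_exp).inv₀ (fun x => (one_add_exp_pos x).ne')

lemma hfun_convex : ConvexOn ℝ (Ici (0:ℝ)) hfun := by
  have hD : Convex ℝ (Ici (0:ℝ)) := convex_Ici 0
  refine convexOn_of_hasDerivWithinAt2_nonneg hD ?_
    (f' := fun x => -(Real.exp x * ((1 + Real.exp x)^2)⁻¹))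
    (f'' := fun x => (Real.exp x * (Real.exp x - 1) * (Real.exp x + 1)) * ((1 + Real.exp x)^4)⁻¹)
    ?_ ?_ ?_
  · exact fun x _ => hfun_cont.continuousWithinAt
  · intro x hx
    have hne : (1 + Real.exp x) ≠ 0 := (one_add_exp_pos x).ne'
    have : HasDerivAt hfun (-(Real.exp x) / (1 + Real.exp x)^2) x := by
      exact ((Real.hasDerivAt_exp x).const_add 1).inv hne
    refine (this.congr_deriv ?_).hasDerivWithinAt
    field_simp
  · intro x hx
    have hne : ((1 + Real.exp x)^2) ≠ 0 := by positivity
    have h1 : HasDerivAt (fun y => Real.exp y * ((1 + Real.exp y)^2)⁻¹)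
        (Real.exp x * ((1 + Real.exp x)^2)⁻¹ +
          Real.exp x * -((2 * (1 + Real.exp x) * Real.exp x) / ((1 + Real.exp x)^2)^2)) x := by
      exact (Real.hasDerivAt_exp x).mul
        ((((Real.hasDerivAt_exp x).const_add 1).pow 2).inv hne |>.congr_deriv (by simp only [Pi.pow_apply]; ring))
    refine ((h1.neg).congr_deriv ?_).hasDerivWithinAt
    have hne' : (1 + Real.exp x) ≠ 0 := (one_add_exp_pos x).ne'
    field_simp
    ring
  · intro x hx
    have hx0 : (0:ℝ) < x := by simpa [interior_Ici] using hx
    have h1 : (1:ℝ) ≤ Real.exp x := by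
      simpa using Real.exp_le_exp.mpr hx0.le
    exact mul_nonneg (mul_nonneg (mul_nonneg (Real.exp_pos x).le (by linarith)) (by positivity)) (by positivity)

lemma four_point {g : ℝ → ℝ} (hg : ConvexOn ℝ (Ici (0:ℝ)) g) {a b c d : ℝ}
    (ha : 0 ≤ a) (hab : a ≤ b) (hbc : b ≤ c) (hcd : c ≤ d) (hsum : a + d = b + c) :
    g b + g c ≤ g a + g d := by
  rcases eq_or_lt_of_le (hab.trans (hbc.trans hcd)) with had | had
  · have : a = b := le_antisymm hab (by linarith)
    have : c = d := le_antisymm hcd (by linarith)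
    have hb : b = a := by linarith
    have hc : c = d := by linarith
    rw [hb, hc]
  · set μ : ℝ := (d - b) / (d - a) with hμdef
    set ν : ℝ := (b - a) / (d - a) with hνdef
    have hda : 0 < d - a := by linarith
    have hμ : 0 ≤ μ := div_nonneg (by linarith) hda.le
    have hν : 0 ≤ ν := div_nonneg (by linarith) hda.le
    have hμν : μ + ν = 1 := by rw [hμdef, hνdef]; field_simp; ring
    have hamem : a ∈ Ici (0:ℝ) := ha
    have hdmem : d ∈ Ici (0:ℝ) := by simp only [mem_Ici]; linarith
    have hb' : μ • a + ν • d = b := by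
      simp only [smul_eq_mul, hμdef, hνdef]; field_simp; ring
    have hc' : ν • a + μ • d = c := by
      simp only [smul_eq_mul, hμdef, hνdef]; field_simp; nlinarith [hsum]
    have h1 := hg.2 hamem hdmem hμ hν hμν
    have h2 := hg.2 hamem hdmem hν hμ (by linarith)
    rw [hb'] at h1
    rw [hc'] at h2
    have := add_le_add h1 h2
    calc g b + g c ≤ (μ • g a + ν • g d) + (ν • g a + μ • g d) := this
      _ = g a + g d := by simp only [smul_eq_mul]; linear_combination (g a + g d) * hμν

lemma Fcont (ξ : ℝ) : Continuous (fun x => Real.cos (x * ξ) * hfun x) :=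
  (Real.continuous_cos.comp (continuous_id.mul continuous_const)).mul hfun_cont

lemma per_period {ξ T a : ℝ} (hξ : 0 < ξ) (hTξ : T * ξ = 2*π) (k : ℕ)
    (hadef : a = (k:ℝ) * T) :
    0 ≤ ∫ x in a..(a + T), Real.cos (x * ξ) * hfun x := by
  have hπ := Real.pi_pos
  have hT : 0 < T := by nlinarith
  have ha0 : 0 ≤ a := by rw [hadef]; positivity
  have hcont : Continuous (fun x => Real.cos (x * ξ) * hfun x) := Fcont ξ
  set F : ℝ → ℝ := fun x => Real.cos (x * ξ) * hfun x with hFdef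
  have e1 : ∫ t in (0:ℝ)..(T/4), F (a + t) = ∫ x in a..(a + T/4), F x := by
    simpa using intervalIntegral.integral_comp_add_left F a
  have e2 : ∫ t in (0:ℝ)..(T/4), F ((a + T/2) - t)
      = ∫ x in (a + T/4)..(a + T/2), F x := by
    rw [intervalIntegral.integral_comp_sub_left F (a + T/2)]
    norm_num; congr 1; ring
  have e3 : ∫ t in (0:ℝ)..(T/4), F ((a + T/2) + t)
      = ∫ x in (a + T/2)..(a + 3*T/4), F x := by
    rw [intervalIntegral.integral_comp_add_left F (a + T/2)]
    norm_num; congr 1; ring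
  have e4 : ∫ t in (0:ℝ)..(T/4), F ((a + T) - t)
      = ∫ x in (a + 3*T/4)..(a + T), F x := by
    rw [intervalIntegral.integral_comp_sub_left F (a + T)]
    norm_num; congr 1; ring
  have split : ∫ x in a..(a + T), F x
      = (((∫ x in a..(a + T/4), F x) + ∫ x in (a + T/4)..(a + T/2), F x)
        + ∫ x in (a + T/2)..(a + 3*T/4), F x) + ∫ x in (a + 3*T/4)..(a + T), F x := by
    rw [intervalIntegral.integral_add_adjacent_intervals,
        intervalIntegral.integral_add_adjacent_intervals,
        intervalIntegral.integral_add_adjacent_intervals] <;>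
      exact hcont.intervalIntegrable _ _
  have hc1 : Continuous (fun t : ℝ => F (a + t)) := hcont.comp (continuous_const.add continuous_id)
  have hc2 : Continuous (fun t : ℝ => F ((a + T/2) - t)) := hcont.comp (continuous_const.sub continuous_id)
  have hc3 : Continuous (fun t : ℝ => F ((a + T/2) + t)) := hcont.comp (continuous_const.add continuous_id)
  have hc4 : Continuous (fun t : ℝ => F ((a + T) - t)) := hcont.comp (continuous_const.sub continuous_id)
  rw [split, ← e1, ← e2, ← e3, ← e4,
    ← intervalIntegral.integral_add (hc1.intervalIntegrable _ _) (hc2.intervalIntegrable _ _),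
    ← intervalIntegral.integral_add (f := fun x => F (a + x) + F ((a + T/2) - x)) ((hc1.add hc2).intervalIntegrable _ _) (hc3.intervalIntegrable _ _),
    ← intervalIntegral.integral_add (f := fun x => F (a + x) + F ((a + T/2) - x) + F ((a + T/2) + x)) (((hc1.add hc2).add hc3).intervalIntegrable _ _) (hc4.intervalIntegrable _ _)]
  apply intervalIntegral.integral_nonneg (by linarith)
  intro t ht
  obtain ⟨ht0, ht1⟩ := ht
  have haξ : a * ξ = (k:ℝ) * (2*π) := by rw [hadef, mul_assoc, hTξ]
  have c1 : Real.cos ((a + t) * ξ) = Real.cos (t * ξ) := by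
    rw [show (a + t) * ξ = t * ξ + (k:ℝ) * (2*π) by linear_combination haξ,
      Real.cos_add_nat_mul_two_pi]
  have c2 : Real.cos (((a + T/2) - t) * ξ) = -Real.cos (t * ξ) := by
    rw [show ((a + T/2) - t) * ξ = (π - t * ξ) + (k:ℝ) * (2*π) by linear_combination haξ + hTξ/2,
      Real.cos_add_nat_mul_two_pi, Real.cos_pi_sub]
  have c3 : Real.cos (((a + T/2) + t) * ξ) = -Real.cos (t * ξ) := by
    rw [show ((a + T/2) + t) * ξ = (t * ξ + π) + (k:ℝ) * (2*π) by linear_combination haξ + hTξ/2,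
      Real.cos_add_nat_mul_two_pi, Real.cos_add_pi]
  have c4 : Real.cos (((a + T) - t) * ξ) = Real.cos (t * ξ) := by
    rw [show ((a + T) - t) * ξ = (2*π - t * ξ) + (k:ℝ) * (2*π) by linear_combination haξ + hTξ,
      Real.cos_add_nat_mul_two_pi, Real.cos_two_pi_sub]
  have hcosnn : 0 ≤ Real.cos (t * ξ) := by
    apply Real.cos_nonneg_of_mem_Icc
    constructor
    · nlinarith
    · nlinarith
  have hfp : hfun ((a + T/2) - t) + hfun ((a + T/2) + t)
      ≤ hfun (a + t) + hfun ((a + T) - t) := by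
    apply four_point hfun_convex (by linarith) (by linarith) (by linarith) (by linarith)
    ring
  simp only [hFdef, c1, c2, c3, c4]
  nlinarith [hcosnn, hfp]

lemma integrableOn_g {ξ : ℝ} : IntegrableOn (fun u => Real.cos (u * ξ) * hfun u) (Ioi (0:ℝ)) := by
  have hexp : IntegrableOn (fun x => Real.exp (-1 * x)) (Ioi (0:ℝ)) :=
    exp_neg_integrableOn_Ioi 0 one_pos
  refine MeasureTheory.Integrable.mono hexp ((Fcont ξ).aestronglyMeasurable.restrict) ?_
  refine (ae_restrict_iff' measurableSet_Ioi).mpr (Filter.Eventually.of_forall fun x hx => ?_)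
  have h1 : 0 < 1 + Real.exp x := one_add_exp_pos x
  have h2 : hfun x ≤ Real.exp (-1 * x) := by
    rw [hfun, show (-1 : ℝ) * x = -x by ring, Real.exp_neg]
    exact inv_anti₀ (Real.exp_pos x) (by linarith)
  have h3 : 0 ≤ hfun x := by rw [hfun]; positivity
  have h4 : |Real.cos (x * ξ)| ≤ 1 := Real.abs_cos_le_one _
  rw [Real.norm_eq_abs, Real.norm_eq_abs, abs_mul, abs_of_nonneg h3,
    abs_of_pos (Real.exp_pos _)]
  nlinarith [abs_nonneg (Real.cos (x * ξ))]

lemma key {ξ : ℝ} (hξ : 0 < ξ) : 0 ≤ ∫ x in Ioi (0:ℝ), Real.cos (x * ξ) * hfun x := by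
  have hπ := Real.pi_pos
  set T : ℝ := 2*π/ξ with hTdef
  have hT : 0 < T := by positivity
  have hTξ : T * ξ = 2*π := by rw [hTdef]; field_simp
  have htend : Filter.Tendsto (fun n : ℕ => (n:ℝ) * T) Filter.atTop Filter.atTop :=
    Filter.Tendsto.atTop_mul_const hT tendsto_natCast_atTop_atTop
  have hlim := intervalIntegral_tendsto_integral_Ioi 0 (integrableOn_g (ξ := ξ)) htend
  refine ge_of_tendsto hlim (Filter.Eventually.of_forall fun n => ?_)
  have hsum := intervalIntegral.sum_integral_adjacent_intervals
    (a := fun k : ℕ => (k:ℝ) * T) (f := fun x => Real.cos (x * ξ) * hfun x) (μ := volume)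
    (n := n) (fun k _ => (Fcont ξ).intervalIntegrable _ _)
  simp only [Nat.cast_zero, zero_mul] at hsum
  rw [← hsum]
  apply Finset.sum_nonneg
  intro k _
  have := per_period hξ hTξ k rfl
  have heq : ((k:ℝ) * T + T) = ((k+1 : ℕ):ℝ) * T := by push_cast; ring
  rwa [heq] at this

theorem stmt_2 : ∀ ξ : ℝ, 0 ≤ ∫ x : ℝ, Real.cos (x * ξ) / (1 + Real.exp |x|) := by
  have main : ∀ ξ : ℝ, 0 < ξ → 0 ≤ ∫ x : ℝ, Real.cos (x * ξ) / (1 + Real.exp |x|) := by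
    intro ξ hξ
    have heq : ∀ x : ℝ, Real.cos (x * ξ) / (1 + Real.exp |x|)
        = (fun u => Real.cos (u * ξ) * hfun u) |x| := by
      intro x
      rcases abs_cases x with ⟨h, _⟩ | ⟨h, _⟩ <;>
        simp [h, hfun, div_eq_mul_inv, neg_mul, Real.cos_neg]
    calc (0:ℝ) ≤ 2 * ∫ x in Ioi (0:ℝ), Real.cos (x * ξ) * hfun x := by
          have := key hξ; linarith
      _ = ∫ x : ℝ, (fun u => Real.cos (u * ξ) * hfun u) |x| := (integral_comp_abs).symm
      _ = ∫ x : ℝ, Real.cos (x * ξ) / (1 + Real.exp |x|) := by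
          congr 1; funext x; rw [heq]
  intro ξ
  rcases lt_trichotomy ξ 0 with hneg | hzero | hpos
  · have : (fun x : ℝ => Real.cos (x * ξ) / (1 + Real.exp |x|))
        = fun x : ℝ => Real.cos (x * (-ξ)) / (1 + Real.exp |x|) := by
      funext x; rw [mul_neg, Real.cos_neg]
    rw [this]
    exact main (-ξ) (by linarith)
  · subst hzero
    apply MeasureTheory.integral_nonneg
    intro x
    simp only [mul_zero, Real.cos_zero]
    positivity
  · exact main ξ hpos
end

section
/- Let a₁, ..., aₙ be positive real numbers. Then the n×n real matrix M with entries M_{ij} = min(aᵢ, aⱼ)/(aᵢ + aⱼ) is positive semidefinite. -/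
open MeasureTheory Set Real

/-- The one-dimensional factors. -/
private noncomputable def gu (c : ℝ) : ℝ → ℝ := (Ioc (0:ℝ) c).indicator 1
private noncomputable def gt' (c : ℝ) : ℝ → ℝ := (Ioi (0:ℝ)).indicator (fun t => Real.exp (-(c * t)))

private lemma gu_integrable (c : ℝ) : Integrable (gu c) := by
  rw [gu, integrable_indicator_iff measurableSet_Ioc]
  exact integrableOn_const measure_Ioc_lt_top.ne

private lemma gt'_integrable {c : ℝ} (hc : 0 < c) : Integrable (gt' c) := by
  rw [gt', integrable_indicator_iff measurableSet_Ioi]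
  simpa [neg_mul] using exp_neg_integrableOn_Ioi 0 hc

private lemma gu_mul (b c : ℝ) (x : ℝ) : gu b x * gu c x = gu (min b c) x := by
  simp only [gu]
  rw [← Set.inter_indicator_mul]
  simp only [Set.Ioc_inter_Ioc, max_self]
  simp [Set.indicator_apply]

private lemma gt'_mul (b c : ℝ) (x : ℝ) : gt' b x * gt' c x = gt' (b + c) x := by
  simp only [gt']
  rw [← Set.inter_indicator_mul]
  congr 1
  · simp
  · ext t; rw [← Real.exp_add]; ring_nf

private lemma gu_integral {c : ℝ} (hc : 0 ≤ c) : ∫ x, gu c x = c := by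
  rw [gu, integral_indicator measurableSet_Ioc]
  simp [Real.volume_Ioc, hc]

private lemma gt'_integral {c : ℝ} (hc : 0 < c) : ∫ x, gt' c x = 1 / c := by
  rw [gt', integral_indicator measurableSet_Ioi]
  have := integral_comp_mul_left_Ioi (fun x => Real.exp (-x)) 0 hc
  simp only [mul_zero, integral_exp_neg_Ioi_zero, smul_eq_mul, mul_one] at this
  rw [show (∫ t in Ioi (0:ℝ), Real.exp (-(c * t))) = ∫ t in Ioi (0:ℝ), Real.exp (-(c * t)) from rfl]
  calc (∫ t in Ioi (0:ℝ), Real.exp (-(c * t))) = c⁻¹ * Real.exp (-(c*0)) := by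
        simpa using this
    _ = 1 / c := by simp

/-- The Gram vectors on ℝ × ℝ. -/
private noncomputable def g (c : ℝ) : ℝ × ℝ → ℝ := fun p => gu c p.1 * gt' c p.2

private lemma g_integrable_mul {b c : ℝ} (hb : 0 < b) (hc : 0 < c) :
    Integrable (fun p => g b p * g c p) := by
  have : (fun p : ℝ × ℝ => g b p * g c p)
      = fun p => gu (min b c) p.1 * gt' (b + c) p.2 := by
    funext p
    simp only [g]
    rw [show gu b p.1 * gt' b p.2 * (gu c p.1 * gt' c p.2)
        = (gu b p.1 * gu c p.1) * (gt' b p.2 * gt' c p.2) by ring, gu_mul, gt'_mul]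
  rw [this, Measure.volume_eq_prod]
  exact (gu_integrable _).mul_prod (gt'_integrable (by positivity))

private lemma g_integral_mul {b c : ℝ} (hb : 0 < b) (hc : 0 < c) :
    ∫ p, g b p * g c p = min b c / (b + c) := by
  have h : (fun p : ℝ × ℝ => g b p * g c p)
      = fun p => gu (min b c) p.1 * gt' (b + c) p.2 := by
    funext p
    simp only [g]
    rw [show gu b p.1 * gt' b p.2 * (gu c p.1 * gt' c p.2)
        = (gu b p.1 * gu c p.1) * (gt' b p.2 * gt' c p.2) by ring, gu_mul, gt'_mul]
  rw [h, Measure.volume_eq_prod, integral_prod_mul,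
    gu_integral (le_min hb.le hc.le), gt'_integral (by positivity)]
  ring

theorem stmt_4 (n : ℕ) (a : Fin n → ℝ) (ha : ∀ i, 0 < a i) :
    (Matrix.of fun i j : Fin n => min (a i) (a j) / (a i + a j)).PosSemidef := by
  refine Matrix.PosSemidef.of_dotProduct_mulVec_nonneg ?_ ?_
  · ext i j
    simp [Matrix.conjTranspose, min_comm (a i) (a j), add_comm (a i) (a j)]
  · intro x
    have key : dotProduct (star x)
        (Matrix.mulVec (Matrix.of fun i j : Fin n => min (a i) (a j) / (a i + a j)) x)
        = ∫ p, (∑ i, x i * g (a i) p) ^ 2 := by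
      have expand : ∀ p : ℝ × ℝ, (∑ i, x i * g (a i) p) ^ 2
          = ∑ i, ∑ j, (x i * x j) * (g (a i) p * g (a j) p) := by
        intro p
        rw [sq, Finset.sum_mul_sum]
        congr 1; funext i; congr 1; funext j; ring
      simp_rw [expand]
      rw [integral_finset_sum _ fun i _ => integrable_finset_sum _ fun j _ =>
        ((g_integrable_mul (ha i) (ha j)).const_mul _)]
      have inner : ∀ i, (∫ p, ∑ j, (x i * x j) * (g (a i) p * g (a j) p))
          = ∑ j, (x i * x j) * (min (a i) (a j) / (a i + a j)) := by
        intro i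
        rw [integral_finset_sum _ fun j _ => ((g_integrable_mul (ha i) (ha j)).const_mul _)]
        simp_rw [integral_const_mul, g_integral_mul (ha i) (ha _)]
      simp_rw [inner]
      simp only [dotProduct, Matrix.mulVec, Matrix.of_apply, star, Pi.star_apply,
        star_trivial]
      refine Finset.sum_congr rfl fun i _ => ?_
      simp only [id, Finset.mul_sum]
      exact Finset.sum_congr rfl fun j _ => by ring
    rw [key]
    exact integral_nonneg fun p => sq_nonneg _
end

section
/- Let (Ω, μ) be a measure space, 2 ≤ p < ∞, and let a, x be nonnegative functions in L_p(μ). Then ‖a+x‖_p^p − ‖a‖_p^p ≤ (2^p − 1) · max{ ∫ a^{p−1} x dμ, ∫ x^p dμ }. -/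
open MeasureTheory Real

lemma Hpp_key {p B : ℝ} (hp : 2 ≤ p) {c t : ℝ} (hc : 0 < c) (hct : c ≤ t)
    (h : (1+c)^(p-2) ≤ B * c^(p-2)) : (1+t)^(p-2) ≤ B * t^(p-2) := by
  have ht : 0 < t := lt_of_lt_of_le hc hct
  have hp2 : (0:ℝ) ≤ p - 2 := by linarith
  have hcp : (0:ℝ) < c ^ (p-2) := rpow_pos_of_pos hc _
  have htp : (0:ℝ) < t ^ (p-2) := rpow_pos_of_pos ht _
  have hB : ((1+c)/c)^(p-2) ≤ B := by
    rw [div_rpow (by linarith) hc.le, div_le_iff₀ hcp]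
    linarith [h]
  have hratio : (1+t)/t ≤ (1+c)/c := by
    rw [div_le_div_iff₀ ht hc]; nlinarith
  have h1 : ((1+t)/t)^(p-2) ≤ ((1+c)/c)^(p-2) :=
    rpow_le_rpow (by positivity) hratio hp2
  have h2 : (1+t)^(p-2) = ((1+t)/t)^(p-2) * t^(p-2) := by
    rw [← mul_rpow (by positivity) ht.le, div_mul_cancel₀]
    exact ht.ne'
  rw [h2]
  exact mul_le_mul_of_nonneg_right (le_trans h1 hB) htp.le

lemma hasDerivAt_H (p A B : ℝ) (hp : 1 ≤ p) (t : ℝ) :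
    HasDerivAt (fun s : ℝ => 1 + A*s + B*s^p - (1+s)^p)
      (A + B*(p*t^(p-1)) - p*(1+t)^(p-1)) t := by
  have h1 : HasDerivAt (fun s : ℝ => s ^ p) (p * t ^ (p-1)) t :=
    Real.hasDerivAt_rpow_const (Or.inr hp)
  have h2 : HasDerivAt (fun s : ℝ => (1+s) ^ p) (p * (1+t) ^ (p-1)) t := by
    have := (Real.hasDerivAt_rpow_const (x := 1+t) (p := p) (Or.inr hp)).comp t
      ((hasDerivAt_id t).const_add 1)
    rw [mul_one] at this; exact this
  have := ((((hasDerivAt_id t).const_mul A).const_add 1).add (h1.const_mul B)).sub h2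
  convert this using 1
  all_goals first | rfl | ring

lemma hasDerivAt_H' (p A B : ℝ) (hp : 2 ≤ p) (t : ℝ) :
    HasDerivAt (fun s : ℝ => A + B*(p*s^(p-1)) - p*(1+s)^(p-1))
      (B*(p*((p-1)*t^(p-2))) - p*((p-1)*(1+t)^(p-2))) t := by
  have hp1 : (1:ℝ) ≤ p - 1 := by linarith
  have he : p - 1 - 1 = p - 2 := by ring
  have h1 : HasDerivAt (fun s : ℝ => s ^ (p-1)) ((p-1) * t ^ (p-2)) t := by
    have := Real.hasDerivAt_rpow_const (x := t) (p := p-1) (Or.inr hp1)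
    rwa [he] at this
  have h2 : HasDerivAt (fun s : ℝ => (1+s) ^ (p-1)) ((p-1) * (1+t) ^ (p-2)) t := by
    have := (Real.hasDerivAt_rpow_const (x := 1+t) (p := p-1) (Or.inr hp1)).comp t
      ((hasDerivAt_id t).const_add 1)
    rw [he, mul_one] at this
    exact this
  have := (((h1.const_mul p).const_mul B).const_add A).sub (h2.const_mul p)
  convert this using 1
  all_goals rfl

lemma key_ineq {p A B : ℝ} (hp : 2 ≤ p)
    (hA : A * (p-1) = p * (2^(p-1) - 1)) (hB : B = 2^p - 1 - A) :
    ∀ t : ℝ, 0 ≤ t → (1+t)^p ≤ 1 + A*t + B*t^p := by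
  have hp1 : (1:ℝ) ≤ p := by linarith
  have hp1' : (0:ℝ) < p - 1 := by linarith
  have h2p : (2:ℝ)^p = 2^(p-1) * 2 := by
    have := Real.rpow_add_one (x:=2) two_ne_zero (p-1)
    rw [show p-1+1 = p by ring] at this; exact this
  have h2p1 : (2:ℝ)^(p-1) = 2^(p-2) * 2 := by
    have := Real.rpow_add_one (x:=2) two_ne_zero (p-2)
    rw [show p-2+1 = p-1 by ring] at this; exact this
  have hy1 : (1:ℝ) ≤ 2^(p-1) := by
    calc (1:ℝ) = 2^(0:ℝ) := (Real.rpow_zero 2).symm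
    _ ≤ 2^(p-1) := Real.rpow_le_rpow_of_exponent_le (by norm_num) (by linarith)
  have hz0 : (0:ℝ) < 2^(p-2) := Real.rpow_pos_of_pos (by norm_num) _
  -- B * (p-1) = (p-2)*2^(p-1) + 1
  have hBval : B * (p-1) = (p-2) * 2^(p-1) + 1 := by
    rw [hB, h2p]; linear_combination -hA
  have hB1 : (1:ℝ) ≤ B := by nlinarith
  have hB2 : (2:ℝ)^(p-2) ≤ B := by
    rcases le_or_gt 3 p with h3 | h3
    · nlinarith
    · have hexp : (2:ℝ)^(p-2) * (3-p) ≤ 1 := by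
        have h1 : (2:ℝ) ≤ Real.exp 1 := by have := Real.add_one_le_exp 1; linarith
        have h2 : (2:ℝ)^(p-2) ≤ Real.exp (p-2) := by
          calc (2:ℝ)^(p-2) ≤ (Real.exp 1)^(p-2) :=
                Real.rpow_le_rpow (by norm_num) h1 (by linarith)
          _ = Real.exp (p-2) := Real.exp_one_rpow _
        have h3' : (3-p : ℝ) ≤ Real.exp (2-p) := by
          have := Real.add_one_le_exp (2-p); linarith
        calc (2:ℝ)^(p-2) * (3-p) ≤ Real.exp (p-2) * Real.exp (2-p) :=
              mul_le_mul h2 h3' (by linarith) (Real.exp_nonneg _)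
        _ = 1 := by rw [← Real.exp_add]; norm_num
      nlinarith
  have hA0 : 0 ≤ A := by nlinarith
  -- A + p*B = p*2^(p-1)
  have hApB : A + p * B = p * 2^(p-1) := by
    have h : (A + p*B - p*2^(p-1)) * (p-1) = 0 := by
      linear_combination hA + p*hBval
    have := mul_eq_zero.mp h
    rcases this with h' | h'
    · linarith
    · linarith
  set H : ℝ → ℝ := fun s => 1 + A*s + B*s^p - (1+s)^p with hHdef
  set H' : ℝ → ℝ := fun s => A + B*(p*s^(p-1)) - p*(1+s)^(p-1) with hH'def
  have hDH : ∀ t : ℝ, HasDerivAt H (H' t) t := fun t => hasDerivAt_H p A B hp1 t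
  have hDH' : ∀ t : ℝ, HasDerivAt H'
      (B*(p*((p-1)*t^(p-2))) - p*((p-1)*(1+t)^(p-2))) t :=
    fun t => hasDerivAt_H' p A B hp t
  have hHdiff : Differentiable ℝ H := fun t => (hDH t).differentiableAt
  have hH'diff : Differentiable ℝ H' := fun t => (hDH' t).differentiableAt
  have hH1 : H 1 = 0 := by
    simp only [hHdef]
    rw [Real.one_rpow, show ((1:ℝ)+1) = 2 by norm_num]
    rw [hB]; ring
  have hH'1 : H' 1 = 0 := by
    simp only [hH'def]
    rw [Real.one_rpow, show ((1:ℝ)+1) = 2 by norm_num]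
    linarith [hApB]
  -- H'' ≥ 0 propagates upward: if (1+c)^(p-2) ≤ B*c^(p-2) with 0 < c then H' monotone on [c, ∞)... 
  have H'monoIcc : ∀ c d : ℝ, 0 < c → (1+c)^(p-2) ≤ B * c^(p-2) →
      MonotoneOn H' (Set.Icc c d) := by
    intro c d hc hkey
    apply monotoneOn_of_deriv_nonneg (convex_Icc _ _)
      hH'diff.continuous.continuousOn hH'diff.differentiableOn
    intro s hs
    rw [interior_Icc] at hs
    rw [(hDH' s).deriv]
    have hkey2 := Hpp_key hp hc hs.1.le hkey
    have hpp : (0:ℝ) ≤ p*(p-1) := by nlinarith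
    have := mul_le_mul_of_nonneg_left hkey2 hpp
    linarith
  have H'monoIci : MonotoneOn H' (Set.Ici 1) := by
    apply monotoneOn_of_deriv_nonneg (convex_Ici _)
      hH'diff.continuous.continuousOn hH'diff.differentiableOn
    intro s hs
    rw [interior_Ici] at hs
    rw [(hDH' s).deriv]
    have hkey1 : ((1:ℝ)+1)^(p-2) ≤ B * (1:ℝ)^(p-2) := by
      rw [Real.one_rpow, show ((1:ℝ)+1) = 2 by norm_num]; linarith
    have hkey2 := Hpp_key hp one_pos (le_of_lt hs) hkey1
    have hpp : (0:ℝ) ≤ p*(p-1) := by nlinarith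
    have := mul_le_mul_of_nonneg_left hkey2 hpp
    linarith
  -- Part 1 : t ≥ 1
  have part1 : ∀ t : ℝ, 1 ≤ t → 0 ≤ H t := by
    intro t ht
    have hmono : MonotoneOn H (Set.Icc 1 t) := by
      apply monotoneOn_of_deriv_nonneg (convex_Icc _ _)
        hHdiff.continuous.continuousOn hHdiff.differentiableOn
      intro s hs
      rw [interior_Icc] at hs
      rw [(hDH s).deriv]
      have : H' 1 ≤ H' s := H'monoIci (Set.mem_Ici.mpr le_rfl)
        (Set.mem_Ici.mpr hs.1.le) hs.1.le
      rw [hH'1] at this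
      exact this
    have := hmono (Set.left_mem_Icc.mpr ht) (Set.right_mem_Icc.mpr ht) ht
    rw [hH1] at this
    exact this
  -- Part 2 : 0 ≤ t ≤ 1
  have part2 : ∀ t : ℝ, 0 ≤ t → t ≤ 1 → 0 ≤ H t := by
    intro c hc0 hc1
    by_contra hneg
    push_neg at hneg
    have hH0 : H 0 = 0 := by
      simp [hHdef, Real.zero_rpow (show p ≠ 0 by linarith)]
    have hc0' : 0 < c := by
      rcases eq_or_lt_of_le hc0 with h | h
      · rw [← h] at hneg; linarith
      · exact h
    have hc1' : c < 1 := by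
      rcases eq_or_lt_of_le hc1 with h | h
      · rw [h] at hneg; linarith
      · exact h
    -- MVT on [0,c] : ∃ z, H' z < 0
    obtain ⟨z, hz, hz'⟩ := exists_hasDerivAt_eq_slope H H' hc0'
      hHdiff.continuous.continuousOn (fun s _ => hDH s)
    have hzneg : H' z < 0 := by
      rw [hz', hH0]
      apply div_neg_of_neg_of_pos (by linarith) (by linarith)
    -- MVT on [c,1] : ∃ w, H' w > 0
    obtain ⟨w, hw, hw'⟩ := exists_hasDerivAt_eq_slope H H' hc1'
      hHdiff.continuous.continuousOn (fun s _ => hDH s)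
    have hwpos : 0 < H' w := by
      rw [hw', hH1]
      apply div_pos (by linarith) (by linarith)
    -- MVT for H' on [z,w] : ∃ ξ, H'' ξ > 0
    have hzw : z < w := lt_trans hz.2 hw.1
    obtain ⟨ξ, hξ, hξ'⟩ := exists_hasDerivAt_eq_slope H'
      (fun t => B*(p*((p-1)*t^(p-2))) - p*((p-1)*(1+t)^(p-2))) hzw
      hH'diff.continuous.continuousOn (fun s _ => hDH' s)
    have hξpos : 0 < B*(p*((p-1)*ξ^(p-2))) - p*((p-1)*(1+ξ)^(p-2)) := by
      rw [hξ']
      apply div_pos (by linarith) (by linarith)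
    have hξ0 : 0 < ξ := lt_trans hz.1 hξ.1
    have hξkey : (1+ξ)^(p-2) ≤ B * ξ^(p-2) := by
      by_contra hcon
      push_neg at hcon
      have hpp : (0:ℝ) < p*(p-1) := by nlinarith
      have := mul_lt_mul_of_pos_left hcon hpp
      linarith
    have hmono := H'monoIcc ξ 1 hξ0 hξkey
    have hwI : w ∈ Set.Icc ξ 1 := ⟨hξ.2.le, hw.2.le⟩
    have h1I : (1:ℝ) ∈ Set.Icc ξ 1 := ⟨by linarith [hξ.1, hz.1, hξ.2, hw.2], le_rfl⟩
    have := hmono hwI h1I hw.2.le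
    rw [hH'1] at this
    linarith
  intro t ht
  rcases le_or_gt t 1 with h | h
  · have := part2 t ht h; simp only [hHdef] at this; linarith
  · have := part1 t h.le; simp only [hHdef] at this; linarith

lemma key_pt {p A B : ℝ} (hp : 2 ≤ p) (hB1 : 1 ≤ B)
    (hkey : ∀ t : ℝ, 0 ≤ t → (1+t)^p ≤ 1 + A*t + B*t^p)
    {s u : ℝ} (hs : 0 ≤ s) (hu : 0 ≤ u) :
    (s+u)^p ≤ s^p + A*(s^(p-1)*u) + B*u^p := by
  rcases eq_or_lt_of_le hs with h0 | hs'
  · rw [← h0]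
    rw [Real.zero_rpow (show p ≠ 0 by linarith), Real.zero_rpow (show p-1 ≠ 0 by linarith)]
    have hup : (0:ℝ) ≤ u^p := Real.rpow_nonneg hu _
    simp only [zero_add, zero_mul, mul_zero, add_zero]
    nlinarith
  · have h := hkey (u/s) (div_nonneg hu hs'.le)
    have hsp : (0:ℝ) < s^p := Real.rpow_pos_of_pos hs' _
    have hspe : s^p = s^(p-1) * s := by
      have := Real.rpow_add_one hs'.ne' (p-1)
      rw [show p-1+1 = p by ring] at this; exact this
    have e1 : s^p * (1+u/s)^p = (s+u)^p := by
      rw [← Real.mul_rpow hs'.le (by positivity)]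
      congr 1; field_simp
    have e2 : s^p * (u/s) = s^(p-1) * u := by
      rw [hspe]; field_simp
    have e3 : s^p * (B*(u/s)^p) = B*u^p := by
      rw [Real.div_rpow hu hs'.le]
      field_simp
    calc (s+u)^p = s^p * (1+u/s)^p := e1.symm
    _ ≤ s^p * (1 + A*(u/s) + B*(u/s)^p) := mul_le_mul_of_nonneg_left h hsp.le
    _ = s^p + A*(s^(p-1)*u) + B*u^p := by linear_combination A * e2 + e3

theorem stmt_6 {Ω : Type*} [MeasurableSpace Ω] (μ : Measure Ω)
    (p : ℝ) (hp : 2 ≤ p)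
    (a x : Ω → ℝ)
    (ha_nonneg : ∀ ω, 0 ≤ a ω) (hx_nonneg : ∀ ω, 0 ≤ x ω)
    (ha_meas : AEMeasurable a μ) (hx_meas : AEMeasurable x μ)
    (ha_mem : Integrable (fun ω => a ω ^ p) μ)
    (hx_mem : Integrable (fun ω => x ω ^ p) μ) :
    (∫ ω, (a ω + x ω) ^ p ∂μ) - (∫ ω, a ω ^ p ∂μ) ≤
      (2 ^ p - 1) * max (∫ ω, a ω ^ (p - 1) * x ω ∂μ) (∫ ω, x ω ^ p ∂μ) := by
  have hp1 : (0:ℝ) < p - 1 := by linarith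
  set A : ℝ := p*(2^(p-1)-1)/(p-1) with hAdef
  have hA : A * (p-1) = p * (2^(p-1) - 1) := by
    rw [hAdef]; field_simp
  set B : ℝ := 2^p - 1 - A with hBdef
  -- numeric facts
  have h2p : (2:ℝ)^p = 2^(p-1) * 2 := by
    have := Real.rpow_add_one (x:=2) two_ne_zero (p-1)
    rw [show p-1+1 = p by ring] at this; exact this
  have hy1 : (1:ℝ) ≤ 2^(p-1) := by
    calc (1:ℝ) = 2^(0:ℝ) := (Real.rpow_zero 2).symm
    _ ≤ 2^(p-1) := Real.rpow_le_rpow_of_exponent_le (by norm_num) (by linarith)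
  have hBval : B * (p-1) = (p-2) * 2^(p-1) + 1 := by
    rw [hBdef, h2p]; linear_combination -hA
  have hB1 : (1:ℝ) ≤ B := by nlinarith
  have hA0 : (0:ℝ) ≤ A := by
    rw [hAdef]
    apply div_nonneg _ hp1.le
    apply mul_nonneg (by linarith)
    linarith
  have hAB : A + B = 2^p - 1 := by rw [hBdef]; ring
  -- key pointwise inequality
  have hkey : ∀ t : ℝ, 0 ≤ t → (1+t)^p ≤ 1 + A*t + B*t^p :=
    key_ineq hp hA hBdef
  have hpt : ∀ ω, (a ω + x ω)^p ≤ a ω^p + (A*(a ω^(p-1)*x ω) + B*x ω^p) := by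
    intro ω
    have := key_pt hp hB1 hkey (ha_nonneg ω) (hx_nonneg ω)
    linarith
  -- bound for a^(p-1)x
  have hbound1 : ∀ ω, a ω^(p-1)*x ω ≤ a ω^p + x ω^p := by
    intro ω
    have hap : (0:ℝ) ≤ a ω ^ p := Real.rpow_nonneg (ha_nonneg ω) _
    have hxp : (0:ℝ) ≤ x ω ^ p := Real.rpow_nonneg (hx_nonneg ω) _
    rcases le_total (x ω) (a ω) with h | h
    · rcases eq_or_lt_of_le (ha_nonneg ω) with h0 | h0
      · rw [← h0, Real.zero_rpow (show p-1 ≠ 0 by linarith), zero_mul,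
          Real.zero_rpow (show p ≠ 0 by linarith)]
        linarith
      · have e : a ω^(p-1) * a ω = a ω^p := by
          have := Real.rpow_add_one h0.ne' (p-1)
          rw [show p-1+1 = p by ring] at this; exact this.symm
        have : a ω^(p-1)*x ω ≤ a ω^(p-1)*a ω :=
          mul_le_mul_of_nonneg_left h (Real.rpow_nonneg h0.le _)
        rw [e] at this
        linarith
    · rcases eq_or_lt_of_le (hx_nonneg ω) with h0 | h0
      · rw [← h0, mul_zero, Real.zero_rpow (show p ≠ 0 by linarith)]
        linarith
      · have e : x ω^(p-1) * x ω = x ω^p := by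
          have := Real.rpow_add_one h0.ne' (p-1)
          rw [show p-1+1 = p by ring] at this; exact this.symm
        have h1 : a ω^(p-1) ≤ x ω^(p-1) :=
          Real.rpow_le_rpow (ha_nonneg ω) h (by linarith)
        have : a ω^(p-1)*x ω ≤ x ω^(p-1)*x ω :=
          mul_le_mul_of_nonneg_right h1 h0.le
        rw [e] at this
        linarith
  -- integrability
  have h1_meas : AEMeasurable (fun ω => a ω^(p-1) * x ω) μ := by fun_prop
  have hsum2 : Integrable (fun ω => a ω^p + x ω^p) μ := ha_mem.add hx_mem
  have h1_int : Integrable (fun ω => a ω^(p-1) * x ω) μ := by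
    apply hsum2.mono h1_meas.aestronglyMeasurable
    apply ae_of_all
    intro ω
    rw [Real.norm_eq_abs, Real.norm_eq_abs]
    rw [abs_of_nonneg (mul_nonneg (Real.rpow_nonneg (ha_nonneg ω) _) (hx_nonneg ω)),
      abs_of_nonneg (add_nonneg (Real.rpow_nonneg (ha_nonneg ω) _)
        (Real.rpow_nonneg (hx_nonneg ω) _))]
    exact hbound1 ω
  have hg_int : Integrable (fun ω => a ω^p + (A*(a ω^(p-1)*x ω) + B*x ω^p)) μ :=
    ha_mem.add ((h1_int.const_mul A).add (hx_mem.const_mul B))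
  have hax_meas : AEMeasurable (fun ω => (a ω + x ω)^p) μ := by fun_prop
  have hax_int : Integrable (fun ω => (a ω + x ω)^p) μ := by
    apply hg_int.mono hax_meas.aestronglyMeasurable
    apply ae_of_all
    intro ω
    rw [Real.norm_eq_abs, Real.norm_eq_abs]
    rw [abs_of_nonneg (Real.rpow_nonneg (add_nonneg (ha_nonneg ω) (hx_nonneg ω)) _)]
    have hg0 : (0:ℝ) ≤ a ω^p + (A*(a ω^(p-1)*x ω) + B*x ω^p) := by
      have := Real.rpow_nonneg (ha_nonneg ω) p
      have := Real.rpow_nonneg (hx_nonneg ω) p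
      have := mul_nonneg (Real.rpow_nonneg (ha_nonneg ω) (p-1)) (hx_nonneg ω)
      nlinarith
    rw [abs_of_nonneg hg0]
    exact hpt ω
  -- integrate
  have hsum : Integrable (fun ω => A*(a ω^(p-1)*x ω) + B*x ω^p) μ :=
    (h1_int.const_mul A).add (hx_mem.const_mul B)
  have hInt : (∫ ω, (a ω + x ω)^p ∂μ) ≤
      (∫ ω, a ω^p ∂μ) + (A * (∫ ω, a ω^(p-1)*x ω ∂μ) + B * (∫ ω, x ω^p ∂μ)) := by
    calc (∫ ω, (a ω + x ω)^p ∂μ)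
        ≤ ∫ ω, (a ω^p + (A*(a ω^(p-1)*x ω) + B*x ω^p)) ∂μ :=
          integral_mono hax_int hg_int hpt
    _ = (∫ ω, a ω^p ∂μ) + (A * (∫ ω, a ω^(p-1)*x ω ∂μ) + B * (∫ ω, x ω^p ∂μ)) := by
        rw [integral_add ha_mem hsum,
          integral_add (h1_int.const_mul A) (hx_mem.const_mul B),
          integral_const_mul, integral_const_mul]
  set I1 := ∫ ω, a ω^(p-1)*x ω ∂μ
  set I2 := ∫ ω, x ω^p ∂μ
  have hM1 : A * I1 ≤ A * max I1 I2 := mul_le_mul_of_nonneg_left (le_max_left _ _) hA0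
  have hM2 : B * I2 ≤ B * max I1 I2 := mul_le_mul_of_nonneg_left (le_max_right _ _) (by linarith)
  have : A * max I1 I2 + B * max I1 I2 = (2^p - 1) * max I1 I2 := by
    rw [← add_mul, hAB]
  linarith
end

section
/- Let A, X be positive semidefinite n×n complex matrices with A invertible, 2 < p < ∞, and 0 < α ≤ p−1. Set θ = α/(p−1) and define q by 1/q = (1−θ)/p + θ. Then ‖A^α X‖_{S_q} ≤ ‖X‖_{S_p}^{1−θ} · ‖A^{p−1} X‖_{S_1}^{θ}. -/
open scoped ComplexOrder

/-- Real powers of a Hermitian matrix via the continuous functional calculus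
(junk value `0` on non-Hermitian matrices). -/
noncomputable def mpow {m : ℕ} (A : Matrix (Fin m) (Fin m) ℂ) (r : ℝ) :
    Matrix (Fin m) (Fin m) ℂ :=
  if hA : A.IsHermitian then hA.cfc (fun t => t ^ r) else 0

/-- The singular values of a complex square matrix. -/
noncomputable def singularValues {m : ℕ} (X : Matrix (Fin m) (Fin m) ℂ) (i : Fin m) : ℝ :=
  Real.sqrt ((Matrix.isHermitian_mul_conjTranspose_self X).eigenvalues i)

/-- The Schatten `q`-norm (finite exponent `q`). -/
noncomputable def schattenNorm {m : ℕ} (q : ℝ) (X : Matrix (Fin m) (Fin m) ℂ) : ℝ :=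
  (∑ i, singularValues X i ^ q) ^ (1 / q)

namespace SK

open Matrix

variable {n : ℕ}

/-- squared euclidean norm of a vector -/
noncomputable def en2 (v : Fin n → ℂ) : ℝ := ∑ i, ‖v i‖ ^ 2

/-- hermitian pairing -/
noncomputable def dotc (v w : Fin n → ℂ) : ℂ := ∑ i, (starRingEnd ℂ) (v i) * w i

lemma en2_nonneg (v : Fin n → ℂ) : 0 ≤ en2 v :=
  Finset.sum_nonneg fun _ _ => by positivity

lemma dotc_self (v : Fin n → ℂ) : dotc v v = (en2 v : ℂ) := by
  simp only [dotc, en2]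
  push_cast
  refine Finset.sum_congr rfl fun i _ => ?_
  rw [← Complex.normSq_eq_conj_mul_self]
  norm_cast
  rw [Complex.sq_norm]

lemma dotc_mulVec_left (S : Matrix (Fin n) (Fin n) ℂ) (v w : Fin n → ℂ) :
    dotc (Sᴴ *ᵥ v) w = dotc v (S *ᵥ w) := by
  simp only [dotc, Matrix.mulVec, dotProduct, Matrix.conjTranspose_apply, map_sum,
    Finset.sum_mul, Finset.mul_sum]
  rw [Finset.sum_comm]
  refine Finset.sum_congr rfl fun i _ => Finset.sum_congr rfl fun j _ => ?_
  simp only [Complex.star_def, _root_.map_mul, Complex.conj_conj]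
  ring

lemma dotc_mulVec_right (S : Matrix (Fin n) (Fin n) ℂ) (v w : Fin n → ℂ) :
    dotc (S *ᵥ v) w = dotc v (Sᴴ *ᵥ w) := by
  have := dotc_mulVec_left Sᴴ v w
  rwa [conjTranspose_conjTranspose] at this

lemma abs_dotc_sq_le (v w : Fin n → ℂ) :
    ‖dotc v w‖ ^ 2 ≤ en2 v * en2 w := by
  have h1 : ‖dotc v w‖ ≤ ∑ i, ‖v i‖ * ‖w i‖ := by
    calc ‖dotc v w‖ ≤ ∑ i, ‖(starRingEnd ℂ) (v i) * w i‖ := norm_sum_le _ _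
      _ ≤ ∑ i, ‖v i‖ * ‖w i‖ := by
          refine Finset.sum_le_sum fun i _ => ?_
          rw [norm_mul, RCLike.norm_conj]
  calc ‖dotc v w‖ ^ 2 ≤ (∑ i, ‖v i‖ * ‖w i‖) ^ 2 :=
        pow_le_pow_left₀ (norm_nonneg _) h1 2
    _ ≤ (∑ i, ‖v i‖ ^ 2) * ∑ i, ‖w i‖ ^ 2 :=
        Finset.sum_mul_sq_le_sq_mul_sq _ _ _
    _ = en2 v * en2 w := rfl

/-- contraction property -/
def Con (S : Matrix (Fin n) (Fin n) ℂ) : Prop := ∀ v, en2 (S *ᵥ v) ≤ en2 v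

lemma Con.mul {S T : Matrix (Fin n) (Fin n) ℂ} (hS : Con S) (hT : Con T) : Con (S * T) := by
  intro v
  rw [← Matrix.mulVec_mulVec]
  exact le_trans (hS _) (hT v)

lemma Con.conjT {S : Matrix (Fin n) (Fin n) ℂ} (hS : Con S) : Con Sᴴ := by
  intro v
  set u := Sᴴ *ᵥ v with hu
  have h1 : (en2 u : ℂ) = dotc v (S *ᵥ u) := by
    rw [← dotc_self, hu, dotc_mulVec_left]
  have h2 : en2 u ≤ ‖dotc v (S *ᵥ u)‖ := by
    rw [← h1, Complex.norm_real, Real.norm_eq_abs, abs_of_nonneg (en2_nonneg u)]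

  have h3 : (en2 u) ^ 2 ≤ en2 v * en2 u := by
    calc (en2 u) ^ 2 ≤ ‖dotc v (S *ᵥ u)‖ ^ 2 :=
          pow_le_pow_left₀ (en2_nonneg u) h2 2
      _ ≤ en2 v * en2 (S *ᵥ u) := abs_dotc_sq_le _ _
      _ ≤ en2 v * en2 u := by
          exact mul_le_mul_of_nonneg_left (hS u) (en2_nonneg v)
  rcases eq_or_lt_of_le (en2_nonneg u) with h | h
  · rw [← h]; exact en2_nonneg v
  · nlinarith [h3]

lemma con_of_star_self_eq_one {S : Matrix (Fin n) (Fin n) ℂ} (h : Sᴴ * S = 1) : Con S := by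
  intro v
  have : (en2 (S *ᵥ v) : ℂ) = (en2 v : ℂ) := by
    rw [← dotc_self, dotc_mulVec_right, Matrix.mulVec_mulVec, h, Matrix.one_mulVec, dotc_self]
  exact le_of_eq (by exact_mod_cast this)

lemma diagonal_mulVec (d : Fin n → ℂ) (v : Fin n → ℂ) :
    (Matrix.diagonal d) *ᵥ v = fun i => d i * v i := by
  funext i
  simp [Matrix.mulVec, dotProduct, Matrix.diagonal_apply, Finset.sum_ite_eq, ite_mul]

lemma con_diagonal (d : Fin n → ℂ) (h : ∀ i, ‖d i‖ ≤ 1) : Con (Matrix.diagonal d) := by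
  intro v
  rw [en2, diagonal_mulVec]
  refine Finset.sum_le_sum fun i _ => ?_
  simp only [norm_mul, mul_pow]
  calc ‖d i‖ ^ 2 * ‖v i‖ ^ 2 ≤ 1 * ‖v i‖ ^ 2 := by
        apply mul_le_mul_of_nonneg_right _ (by positivity)
        calc ‖d i‖ ^ 2 ≤ 1 ^ 2 := pow_le_pow_left₀ (norm_nonneg _) (h i) 2
          _ = 1 := one_pow 2
    _ = ‖v i‖ ^ 2 := one_mul _

lemma con_col {S : Matrix (Fin n) (Fin n) ℂ} (hS : Con S) (j : Fin n) :
    ∑ i, ‖S i j‖ ^ 2 ≤ 1 := by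
  have := hS (Pi.single j 1)
  have hv : en2 (Pi.single j (1:ℂ)) = 1 := by
    simp [en2, Pi.single_apply, apply_ite]
  have hS' : en2 (S *ᵥ Pi.single j (1:ℂ)) = ∑ i, ‖S i j‖ ^ 2 := by
    simp [en2, Matrix.mulVec_single]
  rw [hv, hS'] at this
  exact this

lemma con_row {S : Matrix (Fin n) (Fin n) ℂ} (hS : Con Sᴴ) (i : Fin n) :
    ∑ j, ‖S i j‖ ^ 2 ≤ 1 := by
  have := con_col hS i
  simpa [Matrix.conjTranspose_apply] using this

end SK

namespace SK
open Matrix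
variable {n : ℕ}

lemma rc_ofReal : (RCLike.ofReal : ℝ → ℂ) = Complex.ofReal := rfl

lemma en2_eq_re_dotc (v : Fin n → ℂ) : en2 v = (dotc v v).re := by
  rw [dotc_self, Complex.ofReal_re]

lemma re_dotc_diag (d : Fin n → ℝ) (u : Fin n → ℂ) :
    (dotc u ((Matrix.diagonal fun i => (d i : ℂ)) *ᵥ u)).re = ∑ i, d i * ‖u i‖ ^ 2 := by
  rw [diagonal_mulVec, dotc, Complex.re_sum]
  refine Finset.sum_congr rfl fun i _ => ?_
  have h : (starRingEnd ℂ) (u i) * ((d i : ℂ) * u i) = ((d i * ‖u i‖ ^ 2 : ℝ) : ℂ) := by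
    rw [show (starRingEnd ℂ) (u i) * ((d i : ℂ) * u i)
        = (d i : ℂ) * ((starRingEnd ℂ) (u i) * u i) by ring,
      ← Complex.normSq_eq_conj_mul_self]
    norm_cast
    rw [Complex.sq_norm]
  rw [h, Complex.ofReal_re]

lemma con_of_conjT_mul_self_eq_diag {S : Matrix (Fin n) (Fin n) ℂ} {d : Fin n → ℝ}
    (hd : ∀ i, d i ≤ 1) (h : Sᴴ * S = Matrix.diagonal fun i => (d i : ℂ)) : Con S := by
  intro v
  have h1 : en2 (S *ᵥ v) = (dotc v ((Sᴴ * S) *ᵥ v)).re := by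
    rw [en2_eq_re_dotc, dotc_mulVec_right, Matrix.mulVec_mulVec]
  rw [h1, h, re_dotc_diag]
  refine le_trans (Finset.sum_le_sum fun i _ => ?_) (le_refl (en2 v))
  calc d i * ‖v i‖ ^ 2 ≤ 1 * ‖v i‖ ^ 2 :=
        mul_le_mul_of_nonneg_right (hd i) (by positivity)
    _ = ‖v i‖ ^ 2 := one_mul _

lemma jens {m : ℕ} (w f : Fin m → ℝ) (hw : ∀ i, 0 ≤ w i) (hf : ∀ i, 0 ≤ f i)
    (hw1 : ∑ i, w i ≤ 1) {r : ℝ} (hr : 1 ≤ r) :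
    (∑ i, w i * f i) ^ r ≤ ∑ i, w i * f i ^ r := by
  have hr0 : 0 < r := lt_of_lt_of_le one_pos hr
  have h1 := Real.inner_le_weight_mul_Lp_of_nonneg Finset.univ hr w f hw hf
  have h2 : (∑ i, w i) ^ (1 - r⁻¹) ≤ 1 :=
    Real.rpow_le_one (Finset.sum_nonneg fun i _ => hw i) hw1
      (by rw [sub_nonneg]; exact inv_le_one_of_one_le₀ hr)
  have h3 : ∑ i, w i * f i ≤ (∑ i, w i * f i ^ r) ^ r⁻¹ := by
    calc ∑ i, w i * f i ≤ (∑ i, w i) ^ (1 - r⁻¹) * (∑ i, w i * f i ^ r) ^ r⁻¹ := h1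
      _ ≤ 1 * (∑ i, w i * f i ^ r) ^ r⁻¹ := by
          apply mul_le_mul_of_nonneg_right h2
          apply Real.rpow_nonneg
          exact Finset.sum_nonneg fun i _ => mul_nonneg (hw i) (Real.rpow_nonneg (hf i) r)
      _ = _ := one_mul _
  have hnn : 0 ≤ ∑ i, w i * f i ^ r :=
    Finset.sum_nonneg fun i _ => mul_nonneg (hw i) (Real.rpow_nonneg (hf i) r)
  calc (∑ i, w i * f i) ^ r ≤ ((∑ i, w i * f i ^ r) ^ r⁻¹) ^ r :=
        Real.rpow_le_rpow (Finset.sum_nonneg fun i _ => mul_nonneg (hw i) (hf i)) h3 hr0.le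
    _ = ∑ i, w i * f i ^ r := by
        rw [← Real.rpow_mul hnn, inv_mul_cancel₀ hr0.ne', Real.rpow_one]

end SK

namespace SK
open Matrix
variable {n : ℕ}

lemma con_of_conjT_mul_self_eq (W S : Matrix (Fin n) (Fin n) ℂ) (d : Fin n → ℝ)
    (hd : ∀ i, d i ≤ 1) (hW : Con Wᴴ)
    (h : Sᴴ * S = W * Matrix.diagonal (fun i => (d i : ℂ)) * Wᴴ) : Con S := by
  intro v
  have h1 : en2 (S *ᵥ v) = (dotc v ((Sᴴ * S) *ᵥ v)).re := by
    rw [en2_eq_re_dotc, dotc_mulVec_right, Matrix.mulVec_mulVec]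
  rw [h1, h]
  have h2 : (W * Matrix.diagonal (fun i => (d i : ℂ)) * Wᴴ) *ᵥ v
      = W *ᵥ ((Matrix.diagonal (fun i => (d i : ℂ))) *ᵥ (Wᴴ *ᵥ v)) := by
    rw [Matrix.mulVec_mulVec, Matrix.mulVec_mulVec]
  rw [h2, ← dotc_mulVec_left, re_dotc_diag]
  calc ∑ i, d i * ‖(Wᴴ *ᵥ v) i‖ ^ 2 ≤ ∑ i, ‖(Wᴴ *ᵥ v) i‖ ^ 2 := by
        refine Finset.sum_le_sum fun i _ => ?_
        calc d i * ‖(Wᴴ *ᵥ v) i‖ ^ 2 ≤ 1 * ‖(Wᴴ *ᵥ v) i‖ ^ 2 :=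
              mul_le_mul_of_nonneg_right (hd i) (by positivity)
          _ = _ := one_mul _
    _ = en2 (Wᴴ *ᵥ v) := rfl
    _ ≤ en2 v := hW v

lemma key (C E K : Matrix (Fin n) (Fin n) ℂ) (hE : Con E) (hK : Con K)
    {r : ℝ} (hr : 1 ≤ r) :
    ∑ i, ‖(E * C * K) i i‖ ^ r ≤ ∑ j, singularValues C j ^ r := by
  have hr0 : (0:ℝ) < r := lt_of_lt_of_le one_pos hr
  have hC : (C * Cᴴ).IsHermitian := Matrix.isHermitian_mul_conjTranspose_self C
  set ν : Fin n → ℝ := hC.eigenvalues with hνdef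
  have hν0 : ∀ j, 0 ≤ ν j := fun j =>
    (Matrix.posSemidef_self_mul_conjTranspose C).eigenvalues_nonneg j
  set s : Fin n → ℝ := fun j => Real.sqrt (ν j) with hsdef
  have hs0 : ∀ j, 0 ≤ s j := fun j => Real.sqrt_nonneg _
  have hsv : ∀ j, singularValues C j = s j := fun j => rfl
  set W : Matrix (Fin n) (Fin n) ℂ := (hC.eigenvectorUnitary : Matrix (Fin n) (Fin n) ℂ) with hWdef
  have hW1 : Wᴴ * W = 1 := by
    rw [← Matrix.star_eq_conjTranspose]
    exact Matrix.mem_unitaryGroup_iff'.mp hC.eigenvectorUnitary.2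
  have hW2 : W * Wᴴ = 1 := by
    rw [← Matrix.star_eq_conjTranspose]
    exact Matrix.mem_unitaryGroup_iff.mp hC.eigenvectorUnitary.2
  have hconW : Con W := con_of_star_self_eq_one hW1
  have hconW' : Con Wᴴ := by
    apply con_of_star_self_eq_one
    rw [Matrix.conjTranspose_conjTranspose]
    exact hW2
  have hspec : C * Cᴴ = W * Matrix.diagonal (fun j => (ν j : ℂ)) * Wᴴ := by
    simpa [Matrix.star_eq_conjTranspose, Function.comp_def, rc_ofReal] using hC.spectral_theorem
  have hW1' : ∀ X : Matrix (Fin n) (Fin n) ℂ, Wᴴ * (W * X) = X := by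
    intro X; rw [← Matrix.mul_assoc, hW1, Matrix.one_mul]
  have hWd : ∀ a b : Fin n → ℂ, (W * Matrix.diagonal a * Wᴴ) * (W * Matrix.diagonal b * Wᴴ)
      = W * Matrix.diagonal (fun j => a j * b j) * Wᴴ := by
    intro a b
    simp only [Matrix.mul_assoc]
    rw [hW1', show Matrix.diagonal a * (Matrix.diagonal b * Wᴴ)
      = Matrix.diagonal (fun j => a j * b j) * Wᴴ by
        rw [← Matrix.mul_assoc, Matrix.diagonal_mul_diagonal]]
  have hWdH : ∀ d : Fin n → ℝ, (W * Matrix.diagonal (fun j => (d j : ℂ)) * Wᴴ)ᴴ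
      = W * Matrix.diagonal (fun j => (d j : ℂ)) * Wᴴ := by
    intro d
    have hd : (Matrix.diagonal (fun j => ((d j : ℝ) : ℂ)))ᴴ
        = Matrix.diagonal (fun j => ((d j : ℝ) : ℂ)) := by
      have hf : (star fun j => ((d j : ℝ) : ℂ)) = fun j => ((d j : ℝ) : ℂ) := by
        funext j
        simp [Complex.star_def, Complex.conj_ofReal]
      rw [Matrix.diagonal_conjTranspose, hf]
    rw [Matrix.conjTranspose_mul, Matrix.conjTranspose_mul,
      Matrix.conjTranspose_conjTranspose, hd, Matrix.mul_assoc]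
  set ι : Fin n → ℝ := fun j => if ν j = 0 then 0 else (s j)⁻¹ with hιdef
  set ind : Fin n → ℝ := fun j => if ν j = 0 then 0 else 1 with hinddef
  have hsne : ∀ j, ν j ≠ 0 → s j ≠ 0 := fun j hj =>
    Real.sqrt_ne_zero'.mpr (lt_of_le_of_ne (hν0 j) (Ne.symm hj))
  -- projection identity
  have hzero : (W * Matrix.diagonal (fun j => ((1 - ind j : ℝ) : ℂ)) * Wᴴ) * C = 0 := by
    rw [← Matrix.self_mul_conjTranspose_eq_zero]
    have hGH : ((W * Matrix.diagonal (fun j => ((1 - ind j : ℝ) : ℂ)) * Wᴴ) * C)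
        * ((W * Matrix.diagonal (fun j => ((1 - ind j : ℝ) : ℂ)) * Wᴴ) * C)ᴴ
        = (W * Matrix.diagonal (fun j => ((1 - ind j : ℝ) : ℂ)) * Wᴴ) * (C * Cᴴ)
          * (W * Matrix.diagonal (fun j => ((1 - ind j : ℝ) : ℂ)) * Wᴴ) := by
      rw [Matrix.conjTranspose_mul, hWdH]
      simp only [Matrix.mul_assoc]
    rw [hGH, hspec, hWd, hWd]
    have : (fun j => ((1 - ind j : ℝ) : ℂ) * (ν j : ℂ) * ((1 - ind j : ℝ) : ℂ)) = fun _ => 0 := by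
      funext j
      by_cases hj : ν j = 0 <;> simp [hinddef, hj]
    calc W * Matrix.diagonal (fun j => ((1 - ind j : ℝ) : ℂ) * (ν j : ℂ) * ((1 - ind j : ℝ) : ℂ)) * Wᴴ
        = W * Matrix.diagonal (fun _ => (0:ℂ)) * Wᴴ := by rw [this]
      _ = 0 := by simp [Matrix.diagonal_zero]
  have hπ : W * Matrix.diagonal (fun j => (ind j : ℂ)) * Wᴴ * C = C := by
    have hrepr : Matrix.diagonal (fun j => (ind j : ℂ))
        = 1 - Matrix.diagonal (fun j => ((1 - ind j : ℝ) : ℂ)) := by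
      rw [← Matrix.diagonal_one, Matrix.diagonal_sub]
      congr 1
      funext j
      push_cast
      ring
    rw [hrepr]
    calc W * (1 - Matrix.diagonal (fun j => ((1 - ind j : ℝ) : ℂ))) * Wᴴ * C
        = W * Wᴴ * C - W * Matrix.diagonal (fun j => ((1 - ind j : ℝ) : ℂ)) * Wᴴ * C := by
          simp only [Matrix.mul_sub, Matrix.sub_mul, Matrix.mul_one]
      _ = C - 0 := by rw [hW2, Matrix.one_mul, hzero]
      _ = C := sub_zero C
  set P : Matrix (Fin n) (Fin n) ℂ := W * Matrix.diagonal (fun j => (s j : ℂ)) * Wᴴ with hPdef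
  set V : Matrix (Fin n) (Fin n) ℂ := W * Matrix.diagonal (fun j => (ι j : ℂ)) * Wᴴ * C with hVdef
  have hPV : P * V = C := by
    rw [hPdef, hVdef, ← Matrix.mul_assoc, hWd]
    have : (fun j => (s j : ℂ) * (ι j : ℂ)) = fun j => ((ind j : ℝ) : ℂ) := by
      funext j
      by_cases hj : ν j = 0
      · simp [hιdef, hinddef, hj]
      · simp only [hιdef, hinddef, if_neg hj]
        rw [← Complex.ofReal_mul, mul_inv_cancel₀ (hsne j hj), Complex.ofReal_one]
    rw [this, hπ]
  have hVH : Vᴴ = Cᴴ * (W * Matrix.diagonal (fun j => (ι j : ℂ)) * Wᴴ) := by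
    rw [hVdef, Matrix.conjTranspose_mul, hWdH]
  have hVV : V * Vᴴ = W * Matrix.diagonal (fun j => (ind j : ℂ)) * Wᴴ := by
    rw [hVH, hVdef]
    have e1 : W * Matrix.diagonal (fun j => (ι j : ℂ)) * Wᴴ * C
        * (Cᴴ * (W * Matrix.diagonal (fun j => (ι j : ℂ)) * Wᴴ))
        = (W * Matrix.diagonal (fun j => (ι j : ℂ)) * Wᴴ) * (C * Cᴴ)
          * (W * Matrix.diagonal (fun j => (ι j : ℂ)) * Wᴴ) := by
      simp only [Matrix.mul_assoc]
    rw [e1, hspec, hWd, hWd]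
    have hfeq : (fun j => (ι j : ℂ) * (ν j : ℂ) * (ι j : ℂ)) = fun j => ((ind j : ℝ) : ℂ) := by
      funext j
      by_cases hj : ν j = 0
      · simp [hιdef, hinddef, hj]
      · simp only [hιdef, hinddef, if_neg hj]
        have hνs : ν j = s j * s j := (Real.mul_self_sqrt (hν0 j)).symm
        rw [← Complex.ofReal_mul, ← Complex.ofReal_mul]
        congr 1
        rw [hνs]
        field_simp [hsne j hj]
    rw [hfeq]
  have hconV' : Con Vᴴ :=
    con_of_conjT_mul_self_eq W Vᴴ ind
      (fun i => by by_cases hj : ν i = 0 <;> simp [hinddef, hj])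
      hconW'
      (by rw [Matrix.conjTranspose_conjTranspose, hVV])
  have hconV : Con V := by
    have := hconV'.conjT
    rwa [Matrix.conjTranspose_conjTranspose] at this
  -- decompose E * C * K
  set Q : Matrix (Fin n) (Fin n) ℂ := Matrix.diagonal (fun j => ((Real.sqrt (s j) : ℝ) : ℂ))
    with hQdef
  set T1 : Matrix (Fin n) (Fin n) ℂ := E * W with hT1def
  set T2 : Matrix (Fin n) (Fin n) ℂ := Wᴴ * (V * K) with hT2def
  have hQQ : Q * Q = Matrix.diagonal (fun j => (s j : ℂ)) := by
    rw [hQdef, Matrix.diagonal_mul_diagonal]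
    have hf : (fun j => ((Real.sqrt (s j) : ℝ) : ℂ) * ((Real.sqrt (s j) : ℝ) : ℂ))
        = fun j => ((s j : ℝ) : ℂ) := by
      funext j
      rw [← Complex.ofReal_mul, Real.mul_self_sqrt (hs0 j)]
    rw [hf]
  have hdecomp : E * C * K = (T1 * Q) * (Q * T2) := by
    have e2 : (T1 * Q) * (Q * T2) = E * (W * ((Q * Q) * (Wᴴ * (V * K)))) := by
      rw [hT1def, hT2def]
      simp only [Matrix.mul_assoc]
    rw [e2, hQQ, ← hPV, hPdef]
    simp only [Matrix.mul_assoc]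
  set a : Fin n → ℝ := fun i => ∑ c, ‖T1 i c‖ ^ 2 * s c with hadef
  set b : Fin n → ℝ := fun i => ∑ c, ‖T2 c i‖ ^ 2 * s c with hbdef
  have ha0 : ∀ i, 0 ≤ a i := fun i => Finset.sum_nonneg fun c _ =>
    mul_nonneg (by positivity) (hs0 c)
  have hb0 : ∀ i, 0 ≤ b i := fun i => Finset.sum_nonneg fun c _ =>
    mul_nonneg (by positivity) (hs0 c)
  have hL1 : ∀ i c, ‖(T1 * Q) i c‖ ^ 2 = ‖T1 i c‖ ^ 2 * s c := by
    intro i c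
    rw [Matrix.mul_diagonal, norm_mul, mul_pow]
    congr 1
    rw [Complex.norm_real, Real.norm_eq_abs, abs_of_nonneg (Real.sqrt_nonneg _),
      Real.sq_sqrt (hs0 c)]
  have hL2 : ∀ c i, ‖(Q * T2) c i‖ ^ 2 = ‖T2 c i‖ ^ 2 * s c := by
    intro c i
    rw [Matrix.diagonal_mul, norm_mul, mul_pow]
    rw [Complex.norm_real, Real.norm_eq_abs, abs_of_nonneg (Real.sqrt_nonneg _),
      Real.sq_sqrt (hs0 c)]
    ring
  have hCS : ∀ i, ‖(E * C * K) i i‖ ^ 2 ≤ a i * b i := by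
    intro i
    rw [hdecomp, Matrix.mul_apply]
    calc ‖∑ c, (T1 * Q) i c * (Q * T2) c i‖ ^ 2
        ≤ (∑ c, ‖(T1 * Q) i c‖ * ‖(Q * T2) c i‖) ^ 2 := by
          apply pow_le_pow_left₀ (norm_nonneg _)
          refine le_trans (norm_sum_le _ _) (Finset.sum_le_sum fun c _ => ?_)
          rw [norm_mul]
      _ ≤ (∑ c, ‖(T1 * Q) i c‖ ^ 2) * ∑ c, ‖(Q * T2) c i‖ ^ 2 :=
          Finset.sum_mul_sq_le_sq_mul_sq _ _ _
      _ = a i * b i := by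
          rw [hadef, hbdef]
          congr 1
          · exact Finset.sum_congr rfl fun c _ => hL1 i c
          · exact Finset.sum_congr rfl fun c _ => hL2 c i
  have hterm : ∀ i, ‖(E * C * K) i i‖ ^ r ≤ (a i) ^ (r/2) * (b i) ^ (r/2) := by
    intro i
    have e3 : ‖(E * C * K) i i‖ ^ r = (‖(E * C * K) i i‖ ^ 2) ^ (r/2) := by
      rw [← Real.rpow_natCast ‖(E * C * K) i i‖ 2, ← Real.rpow_mul (norm_nonneg _)]
      congr 1
      push_cast
      ring
    rw [e3, ← Real.mul_rpow (ha0 i) (hb0 i)]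
    exact Real.rpow_le_rpow (by positivity) (hCS i) (by positivity)
  -- Jensen bounds
  have hT1row : ∀ i, ∑ c, ‖T1 i c‖ ^ 2 ≤ 1 := con_row (Con.conjT (hE.mul hconW))
  have hT1col : ∀ c, ∑ i, ‖T1 i c‖ ^ 2 ≤ 1 := con_col (hE.mul hconW)
  have hconT2 : Con T2 := hconW'.mul (hconV.mul hK)
  have hT2col : ∀ i, ∑ c, ‖T2 c i‖ ^ 2 ≤ 1 := con_col hconT2
  have hT2row : ∀ c, ∑ i, ‖T2 c i‖ ^ 2 ≤ 1 := con_row (Con.conjT hconT2)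
  have hA : ∑ i, (a i) ^ r ≤ ∑ j, (s j) ^ r := by
    have h1 : ∀ i, (a i) ^ r ≤ ∑ c, ‖T1 i c‖ ^ 2 * (s c) ^ r := fun i =>
      jens (fun c => ‖T1 i c‖ ^ 2) s (fun c => by positivity) hs0 (hT1row i) hr
    calc ∑ i, a i ^ r ≤ ∑ i, ∑ c, ‖T1 i c‖ ^ 2 * s c ^ r :=
          Finset.sum_le_sum fun i _ => h1 i
      _ = ∑ c, (∑ i, ‖T1 i c‖ ^ 2) * s c ^ r := by
          rw [Finset.sum_comm]
          exact Finset.sum_congr rfl fun c _ => (Finset.sum_mul _ _ _).symm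
      _ ≤ ∑ c, 1 * s c ^ r := Finset.sum_le_sum fun c _ =>
          mul_le_mul_of_nonneg_right (hT1col c) (Real.rpow_nonneg (hs0 c) r)
      _ = ∑ c, s c ^ r := by simp
  have hB : ∑ i, (b i) ^ r ≤ ∑ j, (s j) ^ r := by
    have h1 : ∀ i, (b i) ^ r ≤ ∑ c, ‖T2 c i‖ ^ 2 * (s c) ^ r := fun i =>
      jens (fun c => ‖T2 c i‖ ^ 2) s (fun c => by positivity) hs0 (hT2col i) hr
    calc ∑ i, b i ^ r ≤ ∑ i, ∑ c, ‖T2 c i‖ ^ 2 * s c ^ r :=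
          Finset.sum_le_sum fun i _ => h1 i
      _ = ∑ c, (∑ i, ‖T2 c i‖ ^ 2) * s c ^ r := by
          rw [Finset.sum_comm]
          exact Finset.sum_congr rfl fun c _ => (Finset.sum_mul _ _ _).symm
      _ ≤ ∑ c, 1 * s c ^ r := Finset.sum_le_sum fun c _ =>
          mul_le_mul_of_nonneg_right (hT2row c) (Real.rpow_nonneg (hs0 c) r)
      _ = ∑ c, s c ^ r := by simp
  have hTnn : 0 ≤ ∑ j, (s j) ^ r := Finset.sum_nonneg fun j _ => Real.rpow_nonneg (hs0 j) r
  have hfin : ∑ i, ‖(E * C * K) i i‖ ^ r ≤ ∑ j, (s j) ^ r := by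
    have hstep : ∑ i, ‖(E * C * K) i i‖ ^ r ≤ ∑ i, (a i) ^ (r/2) * (b i) ^ (r/2) :=
      Finset.sum_le_sum fun i _ => hterm i
    have hcs2 : (∑ i, (a i) ^ (r/2) * (b i) ^ (r/2)) ^ 2
        ≤ (∑ i, (a i) ^ r) * ∑ i, (b i) ^ r := by
      have := Finset.sum_mul_sq_le_sq_mul_sq Finset.univ
        (fun i => (a i) ^ (r/2)) (fun i => (b i) ^ (r/2))
      have e4 : ∀ (x : ℝ), 0 ≤ x → (x ^ (r/2)) ^ 2 = x ^ r := by
        intro x hx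
        rw [← Real.rpow_natCast (x ^ (r/2)) 2, ← Real.rpow_mul hx]
        congr 1
        push_cast
        ring
      calc (∑ i, (a i) ^ (r/2) * (b i) ^ (r/2)) ^ 2
          ≤ (∑ i, ((a i) ^ (r/2)) ^ 2) * ∑ i, ((b i) ^ (r/2)) ^ 2 := this
        _ = (∑ i, (a i) ^ r) * ∑ i, (b i) ^ r := by
            congr 1
            · exact Finset.sum_congr rfl fun i _ => e4 _ (ha0 i)
            · exact Finset.sum_congr rfl fun i _ => e4 _ (hb0 i)
    have hx0 : 0 ≤ ∑ i, (a i) ^ (r/2) * (b i) ^ (r/2) :=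
      Finset.sum_nonneg fun i _ =>
        mul_nonneg (Real.rpow_nonneg (ha0 i) _) (Real.rpow_nonneg (hb0 i) _)
    have hfin2 : ∑ i, (a i) ^ (r/2) * (b i) ^ (r/2) ≤ ∑ j, (s j) ^ r := by
      have h5 : (∑ i, (a i) ^ (r/2) * (b i) ^ (r/2)) ^ 2 ≤ (∑ j, (s j) ^ r) ^ 2 := by
        calc (∑ i, (a i) ^ (r/2) * (b i) ^ (r/2)) ^ 2
            ≤ (∑ i, (a i) ^ r) * ∑ i, (b i) ^ r := hcs2
          _ ≤ (∑ j, (s j) ^ r) * ∑ j, (s j) ^ r := by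
              apply mul_le_mul hA hB
                (Finset.sum_nonneg fun i _ => Real.rpow_nonneg (hb0 i) r) hTnn
          _ = (∑ j, (s j) ^ r) ^ 2 := (sq _).symm
      exact (pow_le_pow_iff_left₀ hx0 hTnn two_ne_zero).mp h5
    exact le_trans hstep hfin2
  calc ∑ i, ‖(E * C * K) i i‖ ^ r ≤ ∑ j, (s j) ^ r := hfin
    _ = ∑ j, singularValues C j ^ r := Finset.sum_congr rfl fun j _ => by rw [hsv]

end SK

namespace SK
open Matrix
variable {n : ℕ}

lemma norm_exp_ofReal_mul (w : ℝ) (z : ℂ) :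
    ‖Complex.exp ((w : ℂ) * z)‖ = Real.exp (w * z.re) := by
  rw [Complex.norm_exp]
  congr 1
  simp [Complex.mul_re]

lemma mul_diag_mul_apply (M N : Matrix (Fin n) (Fin n) ℂ) (d : Fin n → ℂ) (i j : Fin n) :
    (M * Matrix.diagonal d * N) i j = ∑ c, d c * (M i c * N c j) := by
  rw [Matrix.mul_apply]
  refine Finset.sum_congr rfl fun c _ => ?_
  rw [Matrix.mul_diagonal]
  ring

lemma schattenNorm_nonneg {m : ℕ} (q : ℝ) (X : Matrix (Fin m) (Fin m) ℂ) :
    0 ≤ schattenNorm q X :=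
  Real.rpow_nonneg (Finset.sum_nonneg fun i _ => Real.rpow_nonneg (Real.sqrt_nonneg _) q) _

end SK

open SK Matrix in
theorem stmt_17 (n : ℕ) (A X : Matrix (Fin n) (Fin n) ℂ)
    (hA : A.PosSemidef) (hAinv : IsUnit A)
    (p : ℝ) (hp : 2 < p) (α : ℝ) (hα0 : 0 < α) (hα : α ≤ p - 1)
    (θ q : ℝ) (hθ : θ = α / (p - 1)) (hq : 1 / q = (1 - θ) / p + θ) :
    schattenNorm q (mpow A α * X) ≤
      schattenNorm p X ^ (1 - θ) * schattenNorm 1 (mpow A (p - 1) * X) ^ θ := by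
  classical
  -- elementary exponent facts
  have hp1 : (1:ℝ) < p := by linarith
  have hp0 : (0:ℝ) < p := by linarith
  have hpm1 : (0:ℝ) < p - 1 := by linarith
  have hθ0 : 0 < θ := by rw [hθ]; positivity
  have hθ1 : θ ≤ 1 := by rw [hθ, div_le_one hpm1]; exact hα
  set p' : ℝ := p / (p - 1) with hp'def
  have hp'0 : 0 < p' := by rw [hp'def]; positivity
  have hpc : p.HolderConjugate p' := by
    rw [Real.holderConjugate_iff]
    refine ⟨hp1, ?_⟩
    rw [hp'def, inv_div]
    field_simp
    ring
  have hq0 : 0 < q := by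
    have h1 : 0 < 1/q := by
      rw [hq]
      have : 0 ≤ (1 - θ)/p := div_nonneg (by linarith) hp0.le
      linarith
    exact (one_div_pos).mp h1
  have hqne : q ≠ 0 := hq0.ne'
  have hq1 : 1 ≤ q := by
    have h1 : 1/q ≤ 1 := by
      rw [hq]
      have h2 : (1 - θ)/p ≤ 1 - θ := by
        rw [div_le_iff₀ hp0]
        nlinarith
      linarith
    rw [div_le_one hq0] at h1
    exact h1
  have hq2 : 0 < q/2 := by positivity
  -- exponent identities
  have hq' : q * (1 - θ) + q * θ * p = p := by
    have h2 : 1/q = (1-θ)/p + θ := hq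
    field_simp [hq0.ne', hp0.ne'] at h2
    linear_combination -h2
  have hE1core : q * (1 - θ) * (p - 1) = (q - 1) * p := by linear_combination -hq'
  have hstepE1 : q * (1 - θ) / p' = q - 1 := by
    rw [hp'def, div_div_eq_mul_div, div_eq_iff hp0.ne']
    linear_combination hE1core
  have hE1 : q / (2 * p') * (1 - θ) = (q - 1) / 2 := by
    rw [show q / (2 * p') * (1 - θ) = q * (1 - θ) / p' / 2 from by ring, hstepE1]
  have hE2 : 1/q + (1 - θ)/p' = 1 := by
    rw [hq, hp'def]
    field_simp
    ring
  have hE3 : q / (2 * p') * p' = q / 2 := by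
    field_simp
  -- A's spectral data
  have hAH : A.IsHermitian := hA.1
  set μ : Fin n → ℝ := hAH.eigenvalues with hμdef
  have hμpos : ∀ c, 0 < μ c := by
    intro c
    rcases (hA.eigenvalues_nonneg c).lt_or_eq with h | h
    · exact h
    · exfalso
      have hdet : A.det = 0 := by
        rw [hAH.det_eq_prod_eigenvalues]
        refine Finset.prod_eq_zero (Finset.mem_univ c) ?_
        rw [← h]
        norm_num
      have h2 := A.isUnit_iff_isUnit_det.mp hAinv
      rw [hdet] at h2
      simp at h2
  set Ua : Matrix (Fin n) (Fin n) ℂ := (hAH.eigenvectorUnitary : Matrix (Fin n) (Fin n) ℂ)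
    with hUadef
  have hUa1 : Uaᴴ * Ua = 1 := by
    rw [← Matrix.star_eq_conjTranspose]
    exact Matrix.mem_unitaryGroup_iff'.mp hAH.eigenvectorUnitary.2
  have hUa2 : Ua * Uaᴴ = 1 := by
    rw [← Matrix.star_eq_conjTranspose]
    exact Matrix.mem_unitaryGroup_iff.mp hAH.eigenvectorUnitary.2
  have hconUa : Con Ua := con_of_star_self_eq_one hUa1
  have hconUa' : Con Uaᴴ := by
    apply con_of_star_self_eq_one
    rw [Matrix.conjTranspose_conjTranspose]
    exact hUa2
  have hmpow : ∀ r : ℝ, mpow A r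
      = Ua * Matrix.diagonal (fun c => ((μ c ^ r : ℝ) : ℂ)) * Uaᴴ := by
    intro r
    rw [mpow, dif_pos hAH]
    rfl
  -- Z's spectral data
  set Z : Matrix (Fin n) (Fin n) ℂ := mpow A α * X with hZdef
  have hZH : (Z * Zᴴ).IsHermitian := Matrix.isHermitian_mul_conjTranspose_self Z
  set ν : Fin n → ℝ := hZH.eigenvalues with hνdef
  have hν0 : ∀ i, 0 ≤ ν i := fun i =>
    (Matrix.posSemidef_self_mul_conjTranspose Z).eigenvalues_nonneg i
  set s : Fin n → ℝ := fun i => Real.sqrt (ν i) with hsdef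
  have hs0 : ∀ i, 0 ≤ s i := fun i => Real.sqrt_nonneg _
  have hsne : ∀ i, ν i ≠ 0 → s i ≠ 0 := fun i hi =>
    Real.sqrt_ne_zero'.mpr (lt_of_le_of_ne (hν0 i) (Ne.symm hi))
  have hsvZ : ∀ i, singularValues Z i = s i := fun i => rfl
  set W : Matrix (Fin n) (Fin n) ℂ := (hZH.eigenvectorUnitary : Matrix (Fin n) (Fin n) ℂ)
    with hWdef
  have hW1 : Wᴴ * W = 1 := by
    rw [← Matrix.star_eq_conjTranspose]
    exact Matrix.mem_unitaryGroup_iff'.mp hZH.eigenvectorUnitary.2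
  have hW2 : W * Wᴴ = 1 := by
    rw [← Matrix.star_eq_conjTranspose]
    exact Matrix.mem_unitaryGroup_iff.mp hZH.eigenvectorUnitary.2
  have hconW : Con W := con_of_star_self_eq_one hW1
  have hconW' : Con Wᴴ := by
    apply con_of_star_self_eq_one
    rw [Matrix.conjTranspose_conjTranspose]
    exact hW2
  have hspecZ : Z * Zᴴ = W * Matrix.diagonal (fun i => (ν i : ℂ)) * Wᴴ := by
    simpa [Matrix.star_eq_conjTranspose, Function.comp_def, rc_ofReal] using hZH.spectral_theorem
  -- the contraction K
  set ι : Fin n → ℝ := fun i => if ν i = 0 then 0 else (s i)⁻¹ with hιdef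
  set ind : Fin n → ℝ := fun i => if ν i = 0 then 0 else 1 with hinddef
  set KM : Matrix (Fin n) (Fin n) ℂ := Zᴴ * W * Matrix.diagonal (fun i => (ι i : ℂ)) with hKMdef
  have hKMH : KMᴴ = Matrix.diagonal (fun i => (ι i : ℂ)) * (Wᴴ * Z) := by
    rw [hKMdef]
    have hd : (Matrix.diagonal (fun i => ((ι i : ℝ) : ℂ)))ᴴ
        = Matrix.diagonal (fun i => ((ι i : ℝ) : ℂ)) := by
      have hf : (star fun i => ((ι i : ℝ) : ℂ)) = fun i => ((ι i : ℝ) : ℂ) := by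
        funext i
        simp [Complex.star_def, Complex.conj_ofReal]
      rw [Matrix.diagonal_conjTranspose, hf]
    rw [Matrix.conjTranspose_mul, Matrix.conjTranspose_mul, hd,
      Matrix.conjTranspose_conjTranspose]
  have hKK : KMᴴ * KM = Matrix.diagonal (fun i => (ind i : ℂ)) := by
    rw [hKMH, hKMdef]
    have e1 : Matrix.diagonal (fun i => (ι i : ℂ)) * (Wᴴ * Z)
        * (Zᴴ * W * Matrix.diagonal (fun i => (ι i : ℂ)))
        = Matrix.diagonal (fun i => (ι i : ℂ)) * (Wᴴ * (Z * Zᴴ) * W)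
          * Matrix.diagonal (fun i => (ι i : ℂ)) := by
      simp only [Matrix.mul_assoc]
    rw [e1, hspecZ]
    have e2 : Wᴴ * (W * Matrix.diagonal (fun i => (ν i : ℂ)) * Wᴴ) * W
        = Matrix.diagonal (fun i => (ν i : ℂ)) := by
      calc Wᴴ * (W * Matrix.diagonal (fun i => (ν i : ℂ)) * Wᴴ) * W
          = (Wᴴ * W) * Matrix.diagonal (fun i => (ν i : ℂ)) * (Wᴴ * W) := by
            simp only [Matrix.mul_assoc]
        _ = Matrix.diagonal (fun i => (ν i : ℂ)) := by
            rw [hW1, Matrix.one_mul, Matrix.mul_one]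
    rw [e2, Matrix.diagonal_mul_diagonal, Matrix.diagonal_mul_diagonal]
    have hf : (fun i => (ι i : ℂ) * (ν i : ℂ) * (ι i : ℂ)) = fun i => ((ind i : ℝ) : ℂ) := by
      funext i
      by_cases hi : ν i = 0
      · simp [hιdef, hinddef, hi]
      · simp only [hιdef, hinddef, if_neg hi]
        have hνs : ν i = s i * s i := (Real.mul_self_sqrt (hν0 i)).symm
        rw [← Complex.ofReal_mul, ← Complex.ofReal_mul]
        congr 1
        rw [hνs]
        field_simp [hsne i hi]
    rw [hf]
  have hconKM : Con KM := con_of_conjT_mul_self_eq_diag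
    (fun i => by by_cases hi : ν i = 0 <;> simp [hinddef, hi]) hKK
  -- exponential families
  set w1 : Fin n → ℝ := fun c => (p - 1) * Real.log (μ c) with hw1def
  set w2 : Fin n → ℝ := fun i => q / (2 * p') * Real.log (ν i) with hw2def
  set ef : Fin n → ℂ → ℂ := fun c z => Complex.exp ((w1 c : ℂ) * z) with hefdef
  set hf : Fin n → ℂ → ℂ := fun i z =>
    if ν i = 0 then 0 else Complex.exp ((w2 i : ℂ) * (1 - z)) with hhfdef
  set Apw : ℂ → Matrix (Fin n) (Fin n) ℂ :=
    fun z => Ua * Matrix.diagonal (fun c => ef c z) * Uaᴴ with hApwdef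
  have hnorme : ∀ c (z : ℂ), ‖ef c z‖ = Real.exp (w1 c * z.re) := fun c z =>
    norm_exp_ofReal_mul (w1 c) z
  have hnormh : ∀ i (z : ℂ), ν i ≠ 0 → ‖hf i z‖ = Real.exp (w2 i * (1 - z.re)) := by
    intro i z hi
    simp only [hhfdef, if_neg hi]
    rw [norm_exp_ofReal_mul]
    simp [Complex.sub_re]
  have hApwmul : ∀ z w : ℂ, Apw z * Apw w = Apw (z + w) := by
    intro z w
    simp only [hApwdef]
    have e1 : Ua * Matrix.diagonal (fun c => ef c z) * Uaᴴ
        * (Ua * Matrix.diagonal (fun c => ef c w) * Uaᴴ)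
        = Ua * (Matrix.diagonal (fun c => ef c z)
          * ((Uaᴴ * Ua) * (Matrix.diagonal (fun c => ef c w) * Uaᴴ))) := by
      simp only [Matrix.mul_assoc]
    rw [e1, hUa1, Matrix.one_mul, ← Matrix.mul_assoc (Matrix.diagonal _),
      Matrix.diagonal_mul_diagonal]
    have hfe : (fun c => ef c z * ef c w) = fun c => ef c (z + w) := by
      funext c
      simp only [hefdef]
      rw [← Complex.exp_add]
      congr 1
      ring
    rw [hfe, Matrix.mul_assoc]
  have hconApw : ∀ z : ℂ, z.re = 0 → Con (Apw z) := by
    intro z hz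
    simp only [hApwdef]
    refine (hconUa.mul (con_diagonal _ ?_)).mul hconUa'
    intro c
    rw [hnorme, hz, mul_zero, Real.exp_zero]
  have hApwθ : Apw (θ : ℂ) = mpow A α := by
    rw [hmpow α]
    simp only [hApwdef]
    have hfe : (fun c => ef c (θ:ℂ)) = fun c => ((μ c ^ α : ℝ) : ℂ) := by
      funext c
      simp only [hefdef]
      rw [show ((w1 c : ℂ) * (θ:ℂ)) = ((w1 c * θ : ℝ) : ℂ) by push_cast; ring,
        ← Complex.ofReal_exp]
      congr 1
      rw [Real.rpow_def_of_pos (hμpos c)]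
      simp only [hw1def]
      rw [hθ]
      field_simp
    rw [hfe]
  have hApw1 : Apw 1 = mpow A (p - 1) := by
    rw [hmpow (p-1)]
    simp only [hApwdef]
    have hfe : (fun c => ef c 1) = fun c => ((μ c ^ (p-1) : ℝ) : ℂ) := by
      funext c
      simp only [hefdef]
      rw [mul_one, ← Complex.ofReal_exp]
      congr 1
      rw [Real.rpow_def_of_pos (hμpos c)]
      simp only [hw1def]
      ring
    rw [hfe]
  -- diagonal form of Wᴴ Z KM
  have hWZK : Wᴴ * (Z * KM) = Matrix.diagonal (fun i => ((ν i * ι i : ℝ) : ℂ)) := by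
    rw [hKMdef]
    have e1 : Wᴴ * (Z * (Zᴴ * W * Matrix.diagonal (fun i => (ι i : ℂ))))
        = (Wᴴ * (Z * Zᴴ) * W) * Matrix.diagonal (fun i => (ι i : ℂ)) := by
      simp only [Matrix.mul_assoc]
    rw [e1, hspecZ]
    have e2 : Wᴴ * (W * Matrix.diagonal (fun i => (ν i : ℂ)) * Wᴴ) * W
        = Matrix.diagonal (fun i => (ν i : ℂ)) := by
      calc Wᴴ * (W * Matrix.diagonal (fun i => (ν i : ℂ)) * Wᴴ) * W
          = (Wᴴ * W) * Matrix.diagonal (fun i => (ν i : ℂ)) * (Wᴴ * W) := by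
            simp only [Matrix.mul_assoc]
        _ = Matrix.diagonal (fun i => (ν i : ℂ)) := by
            rw [hW1, Matrix.one_mul, Matrix.mul_one]
    rw [e2, Matrix.diagonal_mul_diagonal]
    congr 1
    funext i
    push_cast
    ring
  have hνι : ∀ i, ν i ≠ 0 → ν i * ι i = s i := by
    intro i hi
    simp only [hιdef, if_neg hi]
    have hνs : ν i = s i * s i := (Real.mul_self_sqrt (hν0 i)).symm
    rw [hνs]
    field_simp
  -- the analytic function
  set Y : Matrix (Fin n) (Fin n) ℂ := mpow A (p-1) * X with hYdef
  set F : ℂ → ℂ := fun z => ∑ i, hf i z * (Wᴴ * (Apw z * X * KM)) i i with hFdef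
  set T : ℝ := ∑ i, ν i ^ (q/2) with hTdef
  have hT0 : 0 ≤ T := Finset.sum_nonneg fun i _ => Real.rpow_nonneg (hν0 i) _
  have hνpos : ∀ i, ν i ≠ 0 → 0 < ν i := fun i hi => lt_of_le_of_ne (hν0 i) (Ne.symm hi)
  -- value at θ
  have hFθ : F (θ:ℂ) = (T : ℂ) := by
    simp only [hFdef]
    rw [hApwθ, ← hZdef, hWZK]
    have hterm : ∀ i, hf i (θ:ℂ)
        * (Matrix.diagonal (fun j => ((ν j * ι j : ℝ) : ℂ))) i i
        = ((ν i ^ (q/2) : ℝ) : ℂ) := by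
      intro i
      rw [Matrix.diagonal_apply_eq]
      by_cases hi : ν i = 0
      · simp [hhfdef, hi, Real.zero_rpow hq2.ne']
      · simp only [hhfdef, if_neg hi]
        rw [hνι i hi]
        rw [show ((w2 i : ℂ) * (1 - (θ:ℂ))) = ((w2 i * (1 - θ) : ℝ) : ℂ) by push_cast; ring,
          ← Complex.ofReal_exp, ← Complex.ofReal_mul]
        congr 1
        have h3 : w2 i * (1 - θ) = Real.log (ν i) * ((q-1)/2) := by
          simp only [hw2def]
          rw [← hE1]
          ring
        rw [h3, ← Real.rpow_def_of_pos (hνpos i hi)]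
        rw [show s i = ν i ^ ((1:ℝ)/2) from by
          simp only [hsdef]; exact Real.sqrt_eq_rpow _]
        rw [← Real.rpow_add (hνpos i hi)]
        congr 1
        ring
    rw [Finset.sum_congr rfl fun i _ => hterm i, hTdef]
    push_cast
    rfl
  -- boundary bound at re = 0
  set Rp : ℝ := schattenNorm p X with hRpdef
  set R1 : ℝ := schattenNorm 1 Y with hR1def
  have hRp0 : 0 ≤ Rp := schattenNorm_nonneg p X
  have hR10 : 0 ≤ R1 := schattenNorm_nonneg 1 Y
  have hbd0 : ∀ z : ℂ, z.re = 0 → ‖F z‖ ≤ Rp * T ^ ((1:ℝ)/p') := by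
    intro z hz
    have hM : Wᴴ * (Apw z * X * KM) = Wᴴ * Apw z * X * KM := by
      simp only [Matrix.mul_assoc]
    have hg : ∀ i, ‖hf i z‖ = ν i ^ (q/(2*p')) := by
      intro i
      by_cases hi : ν i = 0
      · simp only [hhfdef, if_pos hi, norm_zero, hi]
        rw [Real.zero_rpow]
        positivity
      · rw [hnormh i z hi, hz, Real.rpow_def_of_pos (hνpos i hi)]
        congr 1
        simp only [hw2def]
        ring
    have step1 : ‖F z‖ ≤ ∑ i, ‖(Wᴴ * Apw z * X * KM) i i‖ * (ν i ^ (q/(2*p'))) := by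
      simp only [hFdef]
      refine le_trans (norm_sum_le _ _) (le_of_eq ?_)
      refine Finset.sum_congr rfl fun i _ => ?_
      rw [norm_mul, hM, hg i]
      ring
    have step2 : ∑ i, ‖(Wᴴ * Apw z * X * KM) i i‖ * (ν i ^ (q/(2*p')))
        ≤ (∑ i, ‖(Wᴴ * Apw z * X * KM) i i‖ ^ p) ^ (1/p)
          * (∑ i, (ν i ^ (q/(2*p'))) ^ p') ^ (1/p') :=
      Real.inner_le_Lp_mul_Lq_of_nonneg Finset.univ hpc
        (fun i _ => norm_nonneg _) (fun i _ => Real.rpow_nonneg (hν0 i) _)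
    have hsum2 : ∑ i, (ν i ^ (q/(2*p'))) ^ p' = T := by
      rw [hTdef]
      refine Finset.sum_congr rfl fun i _ => ?_
      rw [← Real.rpow_mul (hν0 i), hE3]
    have step3 : (∑ i, ‖(Wᴴ * Apw z * X * KM) i i‖ ^ p) ^ (1/p) ≤ Rp := by
      rw [hRpdef]
      unfold schattenNorm
      exact Real.rpow_le_rpow
        (Finset.sum_nonneg fun i _ => Real.rpow_nonneg (norm_nonneg _) p)
        (key X (Wᴴ * Apw z) KM (hconW'.mul (hconApw z hz)) hconKM hp1.le)
        (one_div_nonneg.mpr hp0.le)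
    calc ‖F z‖ ≤ ∑ i, ‖(Wᴴ * Apw z * X * KM) i i‖ * (ν i ^ (q/(2*p'))) := step1
      _ ≤ (∑ i, ‖(Wᴴ * Apw z * X * KM) i i‖ ^ p) ^ (1/p)
          * (∑ i, (ν i ^ (q/(2*p'))) ^ p') ^ (1/p') := step2
      _ = (∑ i, ‖(Wᴴ * Apw z * X * KM) i i‖ ^ p) ^ (1/p) * T ^ ((1:ℝ)/p') := by
          rw [hsum2]
      _ ≤ Rp * T ^ ((1:ℝ)/p') :=
          mul_le_mul_of_nonneg_right step3 (Real.rpow_nonneg hT0 _)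
  -- boundary bound at re = 1
  have hbd1 : ∀ z : ℂ, z.re = 1 → ‖F z‖ ≤ R1 := by
    intro z hz
    have hres : (z - 1).re = 0 := by simp [Complex.sub_re, hz]
    set E' : Matrix (Fin n) (Fin n) ℂ :=
      Matrix.diagonal (fun i => hf i z) * (Wᴴ * Apw (z-1)) with hE'def
    have hconE' : Con E' := by
      refine (con_diagonal _ ?_).mul (hconW'.mul (hconApw _ hres))
      intro i
      by_cases hi : ν i = 0
      · simp [hhfdef, hi]
      · rw [hnormh i z hi, hz]
        simp
    have hid : ∀ i, hf i z * (Wᴴ * (Apw z * X * KM)) i i = (E' * Y * KM) i i := by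
      intro i
      have h2 : Apw (z-1) * (Apw 1 * (X * KM)) = Apw z * (X * KM) := by
        rw [← Matrix.mul_assoc, hApwmul, sub_add_cancel]
      have h1 : E' * Y * KM = Matrix.diagonal (fun i => hf i z)
          * (Wᴴ * (Apw z * X * KM)) := by
        rw [hE'def, hYdef, ← hApw1]
        calc Matrix.diagonal (fun i => hf i z) * (Wᴴ * Apw (z-1)) * (Apw 1 * X) * KM
            = Matrix.diagonal (fun i => hf i z)
              * (Wᴴ * (Apw (z-1) * (Apw 1 * (X * KM)))) := by
              simp only [Matrix.mul_assoc]
          _ = Matrix.diagonal (fun i => hf i z) * (Wᴴ * (Apw z * (X * KM))) := by rw [h2]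
          _ = Matrix.diagonal (fun i => hf i z) * (Wᴴ * (Apw z * X * KM)) := by
              simp only [Matrix.mul_assoc]
      rw [h1, Matrix.diagonal_mul]
    have hFz : ‖F z‖ ≤ ∑ i, ‖(E' * Y * KM) i i‖ ^ (1:ℝ) := by
      simp only [hFdef]
      refine le_trans (norm_sum_le _ _) (le_of_eq ?_)
      refine Finset.sum_congr rfl fun i _ => ?_
      rw [hid i, Real.rpow_one]
    have hkey := key Y E' KM hconE' hconKM (le_refl (1:ℝ))
    rw [hR1def]
    calc ‖F z‖ ≤ ∑ i, ‖(E' * Y * KM) i i‖ ^ (1:ℝ) := hFz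
      _ ≤ ∑ j, singularValues Y j ^ (1:ℝ) := hkey
      _ = schattenNorm 1 Y := by
          unfold schattenNorm
          rw [one_div_one, Real.rpow_one]
  -- analyticity and boundedness
  have hFsum : F = fun z => ∑ i, ∑ c,
      hf i z * (ef c z * ((Wᴴ * Ua) i c * ((Uaᴴ * (X * KM)) c i))) := by
    funext z
    simp only [hFdef]
    refine Finset.sum_congr rfl fun i _ => ?_
    have h1 : Wᴴ * (Apw z * X * KM)
        = (Wᴴ * Ua) * Matrix.diagonal (fun c => ef c z) * (Uaᴴ * (X * KM)) := by
      simp only [hApwdef, Matrix.mul_assoc]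
    rw [h1, mul_diag_mul_apply, Finset.mul_sum]
  have hdiffF : Differentiable ℂ F := by
    rw [hFsum]
    refine Differentiable.fun_sum fun i _ => Differentiable.fun_sum fun c _ => Differentiable.fun_mul ?_ ?_
    · by_cases hi : ν i = 0
      · simp only [hhfdef, if_pos hi]
        exact differentiable_const 0
      · simp only [hhfdef, if_neg hi]
        exact (((differentiable_const (1:ℂ)).sub differentiable_id).const_mul _).cexp
    · exact ((differentiable_id.const_mul _).cexp.mul (differentiable_const _))
  have hsmall : ∀ (w x : ℝ), 0 ≤ x → x ≤ 1 → w * x ≤ |w| := by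
    intro w x h0 h1
    calc w * x ≤ |w * x| := le_abs_self _
      _ = |w| * |x| := abs_mul w x
      _ ≤ |w| * 1 := by
          refine mul_le_mul_of_nonneg_left ?_ (abs_nonneg w)
          rw [abs_of_nonneg h0]
          exact h1
      _ = |w| := mul_one _
  have hbdd : BddAbove ((norm ∘ F) '' (Complex.HadamardThreeLines.verticalClosedStrip 0 1)) := by
    refine ⟨∑ i, ∑ c, Real.exp |w2 i|
      * (Real.exp |w1 c| * ‖(Wᴴ * Ua) i c * ((Uaᴴ * (X * KM)) c i)‖), ?_⟩
    rintro y ⟨z, hz, rfl⟩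
    simp only [Function.comp_apply]
    have hz1 : 0 ≤ z.re ∧ z.re ≤ 1 := hz
    rw [hFsum]
    refine le_trans (norm_sum_le _ _) (Finset.sum_le_sum fun i _ => ?_)
    refine le_trans (norm_sum_le _ _) (Finset.sum_le_sum fun c _ => ?_)
    rw [norm_mul, norm_mul]
    have hfb : ‖hf i z‖ ≤ Real.exp |w2 i| := by
      by_cases hi : ν i = 0
      · simp only [hhfdef, if_pos hi, norm_zero]
        exact (Real.exp_pos _).le
      · rw [hnormh i z hi]
        exact Real.exp_le_exp.mpr (hsmall _ _ (by linarith [hz1.2]) (by linarith [hz1.1]))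
    have heb : ‖ef c z‖ ≤ Real.exp |w1 c| := by
      rw [hnorme]
      exact Real.exp_le_exp.mpr (hsmall _ _ hz1.1 hz1.2)
    refine mul_le_mul hfb ?_ (by positivity) (Real.exp_pos _).le
    exact mul_le_mul_of_nonneg_right heb (norm_nonneg _)
  -- Hadamard three lines
  have hmem : (θ:ℂ) ∈ Complex.HadamardThreeLines.verticalClosedStrip 0 1 := by
    simp only [Complex.HadamardThreeLines.verticalClosedStrip, Set.mem_preimage,
      Complex.ofReal_re, Set.mem_Icc]
    exact ⟨hθ0.le, hθ1⟩
  have hmain := Complex.HadamardThreeLines.norm_le_interp_of_mem_verticalClosedStrip' (f := F) zero_lt_one hmem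
    hdiffF.diffContOnCl hbdd
    (fun z hz => hbd0 z (by simpa using hz))
    (fun z hz => hbd1 z (by simpa using hz))
  rw [hFθ] at hmain
  simp only [Complex.ofReal_re, sub_zero, div_one] at hmain
  have hTle : T ≤ (Rp * T ^ ((1:ℝ)/p')) ^ (1-θ) * R1 ^ θ := by
    calc T = ‖(T:ℂ)‖ := by rw [Complex.norm_real, Real.norm_eq_abs, abs_of_nonneg hT0]
      _ ≤ _ := hmain
  -- final algebra
  have hgoalL : schattenNorm q Z = T ^ (1/q) := by
    unfold schattenNorm
    congr 1
    rw [hTdef]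
    refine Finset.sum_congr rfl fun i _ => ?_
    rw [hsvZ i, show s i = ν i ^ ((1:ℝ)/2) from by
        simp only [hsdef]; exact Real.sqrt_eq_rpow _,
      ← Real.rpow_mul (hν0 i)]
    congr 1
    ring
  rw [hgoalL]
  rcases eq_or_lt_of_le hT0 with hT | hT
  · rw [← hT, Real.zero_rpow (by positivity : (1:ℝ)/q ≠ 0)]
    exact mul_nonneg (Real.rpow_nonneg hRp0 _) (Real.rpow_nonneg hR10 _)
  · have hexp : (Rp * T ^ ((1:ℝ)/p')) ^ (1-θ) * R1 ^ θ
        = Rp ^ (1-θ) * R1 ^ θ * T ^ ((1:ℝ)/p' * (1-θ)) := by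
      rw [Real.mul_rpow hRp0 (Real.rpow_nonneg hT0 _), ← Real.rpow_mul hT0]
      ring
    rw [hexp] at hTle
    have hsplit : T = T ^ ((1:ℝ)/q) * T ^ ((1:ℝ)/p' * (1-θ)) := by
      rw [← Real.rpow_add hT, show (1:ℝ)/q + (1:ℝ)/p' * (1-θ) = 1 from by
        linear_combination hE2]
      exact (Real.rpow_one T).symm
    have hpos : 0 < T ^ ((1:ℝ)/p' * (1-θ)) := Real.rpow_pos_of_pos hT _
    have hTle2 : T ^ ((1:ℝ)/q) * T ^ ((1:ℝ)/p' * (1-θ))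
        ≤ Rp ^ (1-θ) * R1 ^ θ * T ^ ((1:ℝ)/p' * (1-θ)) := by
      rw [← hsplit]
      exact hTle


    exact le_of_mul_le_mul_right hTle2 hpos
end
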